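/- arXiv:1301.1445 — 10 statements merged into one kernel-verified Lean document; each statement's English description precedes it below -/
import Mathlib

section
/- Let T > 0 and let q : [0,T] × ℝ → ℝ be a function such that for every t ∈ [0,T] the map ξ ↦ q(t,ξ) is Lebesgue-measurable, and for every ξ ∈ ℝ the map t ↦ q(t,ξ) is continuous and nonnegative. Define τ : ℝ → [0,T] by τ(ξ) = 0 if q(0,ξ) = 0, and τ(ξ) = sup{ t ∈ [0,T] : q(t',ξ) > 0 for all t' ∈ [0,t) } otherwise. Then τ is a Lebesgue-measurable function. -/
/-- Measurability of the wave-breaking time `τ`: if `q(t,·)` is measurable for each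
`t ∈ [0,T]` and `q(·,ξ)` is continuous and nonnegative on `[0,T]` for each `ξ`, then
`τ(ξ) = 0` if `q(0,ξ) = 0` and `τ(ξ) = sup{t ∈ [0,T] : q(t',ξ) > 0 for all t' ∈ [0,t)}`
otherwise, defines a measurable function. -/
theorem wave_breaking_time_measurable (T : ℝ) (hT : 0 < T) (q : ℝ → ℝ → ℝ)
    (hmeas : ∀ t ∈ Set.Icc (0:ℝ) T, Measurable (q t))
    (hcont : ∀ ξ : ℝ, ContinuousOn (fun t => q t ξ) (Set.Icc (0:ℝ) T))
    (hnonneg : ∀ ξ : ℝ, ∀ t ∈ Set.Icc (0:ℝ) T, 0 ≤ q t ξ)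
    (τ : ℝ → ℝ)
    (hτ : ∀ ξ : ℝ, τ ξ = if q 0 ξ = 0 then 0
      else sSup {t | t ∈ Set.Icc (0:ℝ) T ∧ ∀ t' ∈ Set.Ico (0:ℝ) t, 0 < q t' ξ}) :
    Measurable τ := by
  set S : ℝ → Set ℝ := fun ξ =>
    {t | t ∈ Set.Icc (0:ℝ) T ∧ ∀ t' ∈ Set.Ico (0:ℝ) t, 0 < q t' ξ} with hS
  have hS0 : ∀ ξ, (0:ℝ) ∈ S ξ := by
    intro ξ
    refine ⟨⟨le_refl 0, hT.le⟩, fun t' ht' => ?_⟩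
    exact absurd ht' (by simp [Set.Ico_self])
  have hSbdd : ∀ ξ, BddAbove (S ξ) := fun ξ => ⟨T, fun t ht => ht.1.2⟩
  have hSne : ∀ ξ, (S ξ).Nonempty := fun ξ => ⟨0, hS0 ξ⟩
  -- τ is nonnegative and bounded by T
  have hτ0 : ∀ ξ, 0 ≤ τ ξ := by
    intro ξ
    rw [hτ ξ]
    split_ifs with h
    · exact le_refl 0
    · exact le_csSup (hSbdd ξ) (hS0 ξ)
  have hτT : ∀ ξ, τ ξ ≤ T := by
    intro ξ
    rw [hτ ξ]
    split_ifs with h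
    · exact hT.le
    · exact csSup_le (hSne ξ) fun t ht => ht.1.2
  apply measurable_of_Ioi
  intro a
  rcases lt_or_ge a 0 with ha | ha
  · have : τ ⁻¹' Set.Ioi a = Set.univ := by
      ext ξ; simp only [Set.mem_preimage, Set.mem_Ioi, Set.mem_univ, iff_true]
      exact lt_of_lt_of_le ha (hτ0 ξ)
    rw [this]; exact MeasurableSet.univ
  rcases le_or_gt T a with haT | haT
  · have : τ ⁻¹' Set.Ioi a = ∅ := by
      ext ξ; simp only [Set.mem_preimage, Set.mem_Ioi, Set.mem_empty_iff_false, iff_false, not_lt]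
      exact (hτT ξ).trans haT
    rw [this]; exact MeasurableSet.empty
  -- main case : 0 ≤ a < T
  have key : ∀ ξ, a < τ ξ ↔ (¬ q 0 ξ = 0 ∧
      ∃ n : ℕ, ∀ r : ℚ, (r:ℝ) ∈ Set.Icc 0 a → (1:ℝ)/(n+1) ≤ q r ξ) := by
    intro ξ
    rw [hτ ξ]
    split_ifs with h0
    · simp only [not_lt.mpr ha, false_iff, not_and]
      intro h; exact absurd h0 h
    have hq0 : 0 < q 0 ξ := lt_of_le_of_ne (hnonneg ξ 0 ⟨le_refl 0, hT.le⟩) (Ne.symm h0)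
    -- Step 1 : a < sSup (S ξ) ↔ ∀ t ∈ [0,a], 0 < q t ξ
    have step1 : a < sSup (S ξ) ↔ ∀ t ∈ Set.Icc 0 a, 0 < q t ξ := by
      constructor
      · intro hlt t ht
        obtain ⟨b, hb, hab⟩ := exists_lt_of_lt_csSup (hSne ξ) hlt
        exact hb.2 t ⟨ht.1, lt_of_le_of_lt ht.2 hab⟩
      · intro hpos
        have hc : ContinuousWithinAt (fun t => q t ξ) (Set.Icc 0 T) a :=
          hcont ξ a ⟨ha, haT.le⟩
        have hmem : (fun t => q t ξ) ⁻¹' Set.Ioi 0 ∈ nhdsWithin a (Set.Icc 0 T) :=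
          hc (Ioi_mem_nhds (hpos a ⟨ha, le_refl a⟩))
        rw [Metric.mem_nhdsWithin_iff] at hmem
        obtain ⟨ε, hε, hball⟩ := hmem
        set b := min (a + ε) T with hb
        have hab : a < b := lt_min (by linarith) haT
        have hbS : b ∈ S ξ := by
          refine ⟨⟨le_trans ha hab.le, min_le_right _ _⟩, fun t' ht' => ?_⟩
          rcases le_or_gt t' a with h1 | h1
          · exact hpos t' ⟨ht'.1, h1⟩
          · have htT : t' ∈ Set.Icc (0:ℝ) T := ⟨ht'.1, (ht'.2.le.trans (min_le_right _ _))⟩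
            have : t' ∈ Metric.ball a ε := by
              rw [Metric.mem_ball, Real.dist_eq, abs_lt]
              constructor
              · linarith [ht'.2, min_le_left (a + ε) T]
              · linarith [ht'.2, min_le_left (a + ε) T]
            exact hball ⟨this, htT⟩
        exact lt_of_lt_of_le hab (le_csSup (hSbdd ξ) hbS)
    -- Step 2 : uniform lower bound via compactness
    have step2 : (∀ t ∈ Set.Icc 0 a, 0 < q t ξ) ↔
        ∃ n : ℕ, ∀ r : ℚ, (r:ℝ) ∈ Set.Icc 0 a → (1:ℝ)/(n+1) ≤ q r ξ := by
      constructor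
      · intro hpos
        have hcomp : IsCompact (Set.Icc (0:ℝ) a) := isCompact_Icc
        have hconta : ContinuousOn (fun t => q t ξ) (Set.Icc 0 a) :=
          (hcont ξ).mono (Set.Icc_subset_Icc le_rfl haT.le)
        obtain ⟨t₀, ht₀, hmin⟩ := hcomp.exists_isMinOn ⟨0, ⟨le_refl 0, ha⟩⟩ hconta
        obtain ⟨n, hn⟩ := exists_nat_one_div_lt (hpos t₀ ht₀)
        refine ⟨n, fun r hr => ?_⟩
        exact le_trans (le_of_lt (by exact_mod_cast hn)) (hmin hr)
      · rintro ⟨n, hn⟩ t ht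
        have hpos' : (0:ℝ) < 1/(n+1) := by positivity
        -- show 1/(n+1) ≤ q t ξ using density of rationals
        have hC : IsClosed (Set.Icc (0:ℝ) a ∩ (fun t => q t ξ) ⁻¹' Set.Ici ((1:ℝ)/(n+1))) := by
          apply ContinuousOn.preimage_isClosed_of_isClosed
          · exact (hcont ξ).mono (Set.Icc_subset_Icc le_rfl haT.le)
          · exact isClosed_Icc
          · exact isClosed_Ici
        have hsub : Set.Icc (0:ℝ) a ∩ Set.range ((↑) : ℚ → ℝ) ⊆
            Set.Icc (0:ℝ) a ∩ (fun t => q t ξ) ⁻¹' Set.Ici ((1:ℝ)/(n+1)) := by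
          rintro x ⟨hx, r, rfl⟩
          exact ⟨hx, hn r hx⟩
        rcases eq_or_lt_of_le ha with rfl | ha'
        · -- a = 0
          have ht0 : t = 0 := le_antisymm ht.2 ht.1
          subst ht0
          have := hn 0 (by simp)
          push_cast at this
          linarith
        · have hdense : Set.Icc (0:ℝ) a ⊆
              closure (Set.Icc (0:ℝ) a ∩ Set.range ((↑) : ℚ → ℝ)) := by
            have h1 : Set.Icc (0:ℝ) a = closure (Set.Ioo 0 a) := (closure_Ioo ha'.ne).symm
            have h2 : Set.Ioo (0:ℝ) a ⊆
                closure (Set.Ioo (0:ℝ) a ∩ Set.range ((↑) : ℚ → ℝ)) :=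
              Dense.open_subset_closure_inter Rat.denseRange_cast isOpen_Ioo
            calc Set.Icc (0:ℝ) a = closure (Set.Ioo 0 a) := h1
              _ ⊆ closure (closure (Set.Ioo (0:ℝ) a ∩ Set.range ((↑) : ℚ → ℝ))) :=
                  closure_mono h2
              _ = closure (Set.Ioo (0:ℝ) a ∩ Set.range ((↑) : ℚ → ℝ)) := closure_closure
              _ ⊆ closure (Set.Icc (0:ℝ) a ∩ Set.range ((↑) : ℚ → ℝ)) :=
                  closure_mono (Set.inter_subset_inter_left _ Set.Ioo_subset_Icc_self)
          have : t ∈ Set.Icc (0:ℝ) a ∩ (fun t => q t ξ) ⁻¹' Set.Ici ((1:ℝ)/(n+1)) :=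
            hC.closure_subset ((closure_mono hsub) (hdense ht))
          exact lt_of_lt_of_le hpos' this.2
    rw [step1, step2]
    simp [h0]
  have hset : τ ⁻¹' Set.Ioi a = {ξ | ¬ q 0 ξ = 0} ∩
      ⋃ n : ℕ, ⋂ r : ℚ, {ξ | (r:ℝ) ∈ Set.Icc 0 a → (1:ℝ)/(n+1) ≤ q r ξ} := by
    ext ξ
    simp only [Set.mem_preimage, Set.mem_Ioi, Set.mem_inter_iff, Set.mem_setOf_eq,
      Set.mem_iUnion, Set.mem_iInter, key ξ]
  rw [hset]
  apply MeasurableSet.inter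
  · exact (hmeas 0 ⟨le_refl 0, hT.le⟩ (measurableSet_singleton 0)).compl
  · apply MeasurableSet.iUnion
    intro n
    apply MeasurableSet.iInter
    intro r
    by_cases hr : (r:ℝ) ∈ Set.Icc (0:ℝ) a
    · have : {ξ | (r:ℝ) ∈ Set.Icc 0 a → (1:ℝ)/(n+1) ≤ q r ξ}
          = (q r) ⁻¹' Set.Ici ((1:ℝ)/(n+1)) := by
        ext ξ; simp [hr]
      rw [this]
      exact hmeas r ⟨hr.1, hr.2.trans haT.le⟩ measurableSet_Ici
    · have : {ξ | (r:ℝ) ∈ Set.Icc 0 a → (1:ℝ)/(n+1) ≤ q r ξ} = Set.univ := by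
        ext ξ; simp [hr]
      rw [this]; exact MeasurableSet.univ
end

section
/- Let T > 0, k ∈ ℝ, let a : [0,T] → ℝ be continuous, and let q, w, h, r : [0,T] → ℝ be differentiable functions satisfying q' = w, w' = (1/2)h + a·q + k·r, h' = 2a·w, r' = −k·w on [0,T]. Then the quantity q(t)h(t) − w(t)² − r(t)² is constant in t; in particular, if q(0)h(0) = w(0)² + r(0)², then q(t)h(t) = w(t)² + r(t)² for all t ∈ [0,T]. -/
/-- For the characteristic ODE system `q' = w`, `w' = h/2 + a q + k r`, `h' = 2 a w`,
`r' = -k w` on `[0,T]`, the quantity `q h - w² - r²` is constant; in particular the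
constraint `q h = w² + r²` is propagated from the initial data. -/
theorem qh_minus_w_sq_r_sq_invariant (T k : ℝ) (hT : 0 < T)
    (a : ℝ → ℝ) (hacont : ContinuousOn a (Set.Icc (0:ℝ) T))
    (q w h r : ℝ → ℝ)
    (hq : ∀ t ∈ Set.Icc (0:ℝ) T, HasDerivAt q (w t) t)
    (hw : ∀ t ∈ Set.Icc (0:ℝ) T, HasDerivAt w ((1/2) * h t + a t * q t + k * r t) t)
    (hh : ∀ t ∈ Set.Icc (0:ℝ) T, HasDerivAt h (2 * a t * w t) t)
    (hr : ∀ t ∈ Set.Icc (0:ℝ) T, HasDerivAt r (-(k * w t)) t) :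
    (∀ t ∈ Set.Icc (0:ℝ) T,
      q t * h t - w t ^ 2 - r t ^ 2 = q 0 * h 0 - w 0 ^ 2 - r 0 ^ 2) ∧
    (q 0 * h 0 = w 0 ^ 2 + r 0 ^ 2 →
      ∀ t ∈ Set.Icc (0:ℝ) T, q t * h t = w t ^ 2 + r t ^ 2) := by
  set E : ℝ → ℝ := fun t => q t * h t - w t ^ 2 - r t ^ 2 with hE
  have hEderiv : ∀ t ∈ Set.Icc (0:ℝ) T, HasDerivAt E 0 t := by
    intro t ht
    have := (((hq t ht).mul (hh t ht)).sub ((hw t ht).pow 2)).sub ((hr t ht).pow 2)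
    convert this using 1
    · rfl
    · rfl
    · rfl
    · norm_num
      ring
  have hconst : ∀ t ∈ Set.Icc (0:ℝ) T, E t = E 0 := by
    intro t ht
    apply constant_of_derivWithin_zero (f := E) (a := 0) (b := T)
    · intro x hx
      exact ((hEderiv x hx).differentiableAt).differentiableWithinAt
    · intro x hx
      have := (hEderiv x (Set.Ico_subset_Icc_self hx)).hasDerivWithinAt (s := Set.Icc 0 T)
      exact this.derivWithin ((uniqueDiffOn_Icc hT) x (Set.Ico_subset_Icc_self hx))
    · exact ht
  refine ⟨hconst, fun h0 t ht => ?_⟩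
  have := hconst t ht
  simp only [hE] at this
  nlinarith [this]
end

section
/- For every A ≥ 0 there exists a constant C ≥ 0, depending only on A, with the following property. Let T > 0, k ∈ ℝ with |k| ≤ A, a : [0,T] → ℝ continuous with |a(t)| ≤ A for all t, and let q, w, h, r : [0,T] → ℝ be differentiable with q' = w, w' = (1/2)h + a·q + k·r, h' = 2a·w, r' = −k·w on [0,T]; assume moreover q(t) ≥ 0, h(t) ≥ 0 and q(t)h(t) = w(t)² + r(t)² for all t ∈ [0,T]. Then for all t ∈ [0,T]: (1/2)·e^{−Ct}·(q(0)+h(0))² ≤ (q(t)+h(t))² ≤ 2·e^{Ct}·(q(0)+h(0))². In particular q + h remains bounded and strictly bounded away from zero if q(0)+h(0) > 0. -/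
/-- Two-sided exponential bounds on `(q+h)²` along the characteristic ODE system:
for every `A ≥ 0` there is `C ≥ 0`, depending only on `A`, such that for any solution
of `q' = w`, `w' = h/2 + a q + k r`, `h' = 2 a w`, `r' = -k w` on `[0,T]` with
`|k| ≤ A`, `|a| ≤ A`, `q, h ≥ 0` and `q h = w² + r²`, one has
`(1/2) e^{-Ct} (q(0)+h(0))² ≤ (q(t)+h(t))² ≤ 2 e^{Ct} (q(0)+h(0))²`. -/
theorem qh_exponential_bounds :
    ∀ A : ℝ, 0 ≤ A → ∃ C : ℝ, 0 ≤ C ∧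
    ∀ (T k : ℝ), 0 < T → |k| ≤ A →
    ∀ a : ℝ → ℝ, ContinuousOn a (Set.Icc (0:ℝ) T) →
      (∀ t ∈ Set.Icc (0:ℝ) T, |a t| ≤ A) →
    ∀ q w h r : ℝ → ℝ,
    (∀ t ∈ Set.Icc (0:ℝ) T, HasDerivAt q (w t) t) →
    (∀ t ∈ Set.Icc (0:ℝ) T, HasDerivAt w ((1/2) * h t + a t * q t + k * r t) t) →
    (∀ t ∈ Set.Icc (0:ℝ) T, HasDerivAt h (2 * a t * w t) t) →
    (∀ t ∈ Set.Icc (0:ℝ) T, HasDerivAt r (-(k * w t)) t) →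
    (∀ t ∈ Set.Icc (0:ℝ) T, 0 ≤ q t ∧ 0 ≤ h t ∧ q t * h t = w t ^ 2 + r t ^ 2) →
    ∀ t ∈ Set.Icc (0:ℝ) T,
      (1/2) * Real.exp (-(C * t)) * (q 0 + h 0) ^ 2 ≤ (q t + h t) ^ 2 ∧
      (q t + h t) ^ 2 ≤ 2 * Real.exp (C * t) * (q 0 + h 0) ^ 2 := by
  intro A hA
  refine ⟨1 + 2 * A, by linarith, ?_⟩
  intro T k hT hk a ha haA q w h r hq hw hh hr hpos
  set C : ℝ := 1 + 2 * A with hCdef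
  have hC0 : 0 ≤ C := by simp only [hCdef]; linarith
  -- derivative of F = (q+h)^2
  set F : ℝ → ℝ := fun t => (q t + h t) ^ 2 with hFdef
  set D : ℝ → ℝ := fun t => 2 * (q t + h t) ^ 1 * (w t + 2 * a t * w t) with hDdef
  have hF : ∀ s ∈ Set.Icc (0:ℝ) T, HasDerivAt F (D s) s := by
    intro s hs
    have := ((hq s hs).add (hh s hs)).pow 2
    simpa [hFdef, hDdef, Pi.pow_def, Pi.add_def] using this
  -- bound |D| ≤ C F
  have hDb : ∀ s ∈ Set.Icc (0:ℝ) T, |D s| ≤ C * F s := by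
    intro s hs
    obtain ⟨hq0, hh0, hqh⟩ := hpos s hs
    have hS : 0 ≤ q s + h s := by linarith
    have hw2 : w s ^ 2 ≤ ((q s + h s) / 2) ^ 2 := by
      nlinarith [sq_nonneg (q s - h s), sq_nonneg (r s)]
    have hp1 : (q s + h s) * w s ≤ (q s + h s) ^ 2 / 2 := by
      nlinarith [sq_nonneg (w s - (q s + h s) / 2)]
    have hp2 : -((q s + h s) ^ 2 / 2) ≤ (q s + h s) * w s := by
      nlinarith [sq_nonneg (w s + (q s + h s) / 2)]
    obtain ⟨ha1, ha2⟩ := abs_le.mp (haA s hs)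
    rw [abs_le]
    constructor <;>
    · simp only [hDdef, hFdef, hCdef, pow_one]
      nlinarith [mul_nonneg (by linarith : (0:ℝ) ≤ A - a s)
          (by linarith : (0:ℝ) ≤ (q s + h s) ^ 2 / 2 - (q s + h s) * w s),
        mul_nonneg (by linarith : (0:ℝ) ≤ A + a s)
          (by linarith : (0:ℝ) ≤ (q s + h s) ^ 2 / 2 + (q s + h s) * w s),
        mul_nonneg (by linarith : (0:ℝ) ≤ A - a s)
          (by linarith : (0:ℝ) ≤ (q s + h s) ^ 2 / 2 + (q s + h s) * w s),
        mul_nonneg (by linarith : (0:ℝ) ≤ A + a s)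
          (by linarith : (0:ℝ) ≤ (q s + h s) ^ 2 / 2 - (q s + h s) * w s)]
  -- G decreasing, H increasing
  have hGd : ∀ s ∈ Set.Icc (0:ℝ) T,
      HasDerivAt (fun t => Real.exp (-(C * t)) * F t)
        (Real.exp (-(C * s)) * (-C) * F s + Real.exp (-(C * s)) * D s) s := by
    intro s hs
    have h1 : HasDerivAt (fun t : ℝ => -(C * t)) (-C) s := by
      simpa [Pi.neg_def] using ((hasDerivAt_id s).const_mul C).neg
    have h2 := h1.exp
    have := h2.mul (hF s hs)
    simpa [mul_comm, mul_left_comm, mul_assoc, Pi.mul_def] using this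
  have hHd : ∀ s ∈ Set.Icc (0:ℝ) T,
      HasDerivAt (fun t => Real.exp (C * t) * F t)
        (Real.exp (C * s) * C * F s + Real.exp (C * s) * D s) s := by
    intro s hs
    have h1 : HasDerivAt (fun t : ℝ => C * t) C s := by
      simpa using (hasDerivAt_id s).const_mul C
    have := h1.exp.mul (hF s hs)
    simpa [mul_comm, mul_left_comm, mul_assoc, Pi.mul_def] using this
  have hIcc : Convex ℝ (Set.Icc (0:ℝ) T) := convex_Icc 0 T
  have hint : interior (Set.Icc (0:ℝ) T) = Set.Ioo 0 T := interior_Icc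
  have hsub : Set.Ioo (0:ℝ) T ⊆ Set.Icc (0:ℝ) T := Set.Ioo_subset_Icc_self
  -- antitone
  have hGanti : AntitoneOn (fun t => Real.exp (-(C * t)) * F t) (Set.Icc (0:ℝ) T) := by
    apply antitoneOn_of_deriv_nonpos hIcc
    · exact fun s hs => ((hGd s hs).continuousAt).continuousWithinAt
    · rw [hint]; exact fun s hs => ((hGd s (hsub hs)).differentiableAt).differentiableWithinAt
    · rw [hint]
      intro s hs
      rw [(hGd s (hsub hs)).deriv]
      have hb := hDb s (hsub hs)
      have he : 0 < Real.exp (-(C * s)) := Real.exp_pos _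
      have : D s ≤ C * F s := (abs_le.mp hb).2
      nlinarith
  have hHmono : MonotoneOn (fun t => Real.exp (C * t) * F t) (Set.Icc (0:ℝ) T) := by
    apply monotoneOn_of_deriv_nonneg hIcc
    · exact fun s hs => ((hHd s hs).continuousAt).continuousWithinAt
    · rw [hint]; exact fun s hs => ((hHd s (hsub hs)).differentiableAt).differentiableWithinAt
    · rw [hint]
      intro s hs
      rw [(hHd s (hsub hs)).deriv]
      have hb := hDb s (hsub hs)
      have he : 0 < Real.exp (C * s) := Real.exp_pos _
      have : -(C * F s) ≤ D s := neg_le_of_abs_le hb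
      nlinarith
  intro t ht
  have h0mem : (0:ℝ) ∈ Set.Icc (0:ℝ) T := ⟨le_refl _, le_of_lt hT⟩
  have ht0 : 0 ≤ t := ht.1
  have hG := hGanti h0mem ht ht0
  have hH := hHmono h0mem ht ht0
  simp only [mul_zero, neg_zero, Real.exp_zero, one_mul] at hG hH
  have hept : 0 < Real.exp (-(C * t)) := Real.exp_pos _
  have hept' : 0 < Real.exp (C * t) := Real.exp_pos _
  have hexy : Real.exp (-(C * t)) * Real.exp (C * t) = 1 := by
    rw [← Real.exp_add]; simp
  have hF0 : 0 ≤ F 0 := sq_nonneg _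
  have hFt : 0 ≤ F t := sq_nonneg _
  constructor
  · -- (1/2) e^{-Ct} F 0 ≤ F t ; from F 0 ≤ e^{Ct} F t
    have h1 : F 0 ≤ Real.exp (C * t) * F t := hH
    have := mul_le_mul_of_nonneg_left h1 (le_of_lt hept)
    calc (1/2) * Real.exp (-(C * t)) * (q 0 + h 0) ^ 2
        ≤ Real.exp (-(C * t)) * F 0 := by
          simp only [hFdef]; nlinarith [sq_nonneg (q 0 + h 0)]
      _ ≤ Real.exp (-(C * t)) * (Real.exp (C * t) * F t) := this
      _ = F t := by rw [← mul_assoc, hexy, one_mul]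
      _ = (q t + h t) ^ 2 := rfl
  · have h1 : Real.exp (-(C * t)) * F t ≤ F 0 := hG
    have := mul_le_mul_of_nonneg_left h1 (le_of_lt hept')
    calc (q t + h t) ^ 2 = F t := rfl
      _ = Real.exp (C * t) * (Real.exp (-(C * t)) * F t) := by
          rw [← mul_assoc, mul_comm (Real.exp (C * t)), hexy, one_mul]
      _ ≤ Real.exp (C * t) * F 0 := this
      _ ≤ 2 * Real.exp (C * t) * (q 0 + h 0) ^ 2 := by
          simp only [hFdef]; nlinarith [sq_nonneg (q 0 + h 0)]
end

section
/- For every A ≥ 0 there exists γ ∈ (0, 1/2), depending only on A, with the following property. Let T > 0, k ∈ ℝ with |k| ≤ A, a : [0,T] → ℝ continuous with |a(t)| ≤ A for all t, and let q, w, h, r : [0,T] → ℝ be differentiable with q' = w, w' = (1/2)h + a·q + k·r, h' = 2a·w, r' = −k·w on [0,T]; assume q(t) ≥ 0, h(t) ≥ 0 and q(t)h(t) = w(t)² + r(t)² for all t ∈ [0,T], and r(0) = −k·q(0). Then for every t ∈ [0,T] such that q(t) + h(t) > 0 and q(t) ≤ γ·(q(t)+h(t)), the function s ↦ w(s)/(q(s)+h(s))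 is differentiable at t with derivative at least 1/4. -/
/-- For every `A ≥ 0` there is `γ ∈ (0, 1/2)`, depending only on `A`, such that for any
solution of the characteristic ODE system `q' = w`, `w' = h/2 + a q + k r`, `h' = 2 a w`,
`r' = -k w` on `[0,T]` with `|k| ≤ A`, `|a| ≤ A`, `q, h ≥ 0`, `q h = w² + r²` and
`r(0) = -k q(0)`: at every time `t` with `q(t)+h(t) > 0` and `q(t) ≤ γ (q(t)+h(t))`,
the function `w/(q+h)` is differentiable (within `[0,T]`) with derivative at least `1/4`. -/
theorem w_over_qh_derivative_lower_bound :
    ∀ A : ℝ, 0 ≤ A → ∃ γ : ℝ, γ ∈ Set.Ioo (0:ℝ) (1/2) ∧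
    ∀ (T k : ℝ), 0 < T → |k| ≤ A →
    ∀ a : ℝ → ℝ, ContinuousOn a (Set.Icc (0:ℝ) T) →
      (∀ t ∈ Set.Icc (0:ℝ) T, |a t| ≤ A) →
    ∀ q w h r : ℝ → ℝ,
    (∀ t ∈ Set.Icc (0:ℝ) T, HasDerivAt q (w t) t) →
    (∀ t ∈ Set.Icc (0:ℝ) T, HasDerivAt w ((1/2) * h t + a t * q t + k * r t) t) →
    (∀ t ∈ Set.Icc (0:ℝ) T, HasDerivAt h (2 * a t * w t) t) →
    (∀ t ∈ Set.Icc (0:ℝ) T, HasDerivAt r (-(k * w t)) t) →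
    (∀ t ∈ Set.Icc (0:ℝ) T, 0 ≤ q t ∧ 0 ≤ h t ∧ q t * h t = w t ^ 2 + r t ^ 2) →
    r 0 = -(k * q 0) →
    ∀ t ∈ Set.Icc (0:ℝ) T, 0 < q t + h t → q t ≤ γ * (q t + h t) →
    ∃ d : ℝ, 1/4 ≤ d ∧
      HasDerivWithinAt (fun s => w s / (q s + h s)) d (Set.Icc (0:ℝ) T) t := by
  intro A hA
  set C : ℝ := 3/2 + 3*A + A^2 with hC
  have hCpos : 0 < C := by positivity
  refine ⟨1/(4*C), ⟨by positivity, ?_⟩, ?_⟩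
  · rw [div_lt_div_iff₀ (by positivity) (by norm_num), hC]
    nlinarith [sq_nonneg A]
  intro T k hT hk a hacont haA q w h r hq hw hh hr hpos hr0 t ht hQ hγ
  -- r s = -(k * q s) on [0, T]
  have hrkq : ∀ s ∈ Set.Icc (0:ℝ) T, r s + k * q s = r 0 + k * q 0 := by
    refine constant_of_has_deriv_right_zero ?_ ?_
    · intro x hx
      exact ((hr x hx).continuousAt.add ((hq x hx).continuousAt.const_mul k)).continuousWithinAt
    · intro x hx
      have hx' : x ∈ Set.Icc (0:ℝ) T := Set.Ico_subset_Icc_self hx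
      have hd : HasDerivAt (fun s => r s + k * q s) (-(k * w x) + k * w x) x :=
        (hr x hx').add ((hq x hx').const_mul k)
      simpa using hd.hasDerivWithinAt
  have hrt : r t = -(k * q t) := by
    have := hrkq t ht
    rw [hr0] at this
    linarith
  -- derivative of w/(q+h) at t
  have hQd : HasDerivAt (fun s => q s + h s) (w t + 2 * a t * w t) t :=
    (hq t ht).add (hh t ht)
  have hdiv := (hw t ht).div hQd (ne_of_gt hQ)
  refine ⟨_, ?_, hdiv.hasDerivWithinAt⟩
  -- the inequality
  obtain ⟨hq0, hh0, hcon⟩ := hpos t ht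
  have hw2 : w t ^ 2 + k ^ 2 * q t ^ 2 = q t * h t := by
    rw [hcon, hrt]; ring
  have ha1 : a t ≤ A := (abs_le.mp (haA t ht)).2
  have ha2 : -A ≤ a t := (abs_le.mp (haA t ht)).1
  have hk2 : k ^ 2 ≤ A ^ 2 := by
    have h1 := abs_le.mp hk
    nlinarith [h1.1, h1.2]
  have hγ' : q t * (4 * C) ≤ q t + h t := by
    rw [one_div, inv_mul_eq_div, le_div_iff₀ (by positivity : (0:ℝ) < 4 * C)] at hγ
    exact hγ
  rw [hrt, le_div_iff₀ (by positivity)]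
  have P1 : 0 ≤ (1 + 2*A) * (q t * h t - w t ^ 2) := by
    have : w t ^ 2 ≤ q t * h t := by nlinarith [mul_nonneg (sq_nonneg k) (sq_nonneg (q t))]
    have h12 : (0:ℝ) ≤ 1 + 2*A := by linarith
    exact mul_nonneg h12 (by linarith)
  have P2 : 0 ≤ (A - a t) * w t ^ 2 := mul_nonneg (by linarith) (sq_nonneg _)
  have P3 : 0 ≤ (A + a t) * (q t * (q t + h t)) :=
    mul_nonneg (by linarith) (mul_nonneg hq0 hQ.le)
  have P4 : 0 ≤ (A^2 - k^2) * (q t * (q t + h t)) :=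
    mul_nonneg (by linarith) (mul_nonneg hq0 hQ.le)
  have P5 : 0 ≤ (1 + 2*A) * q t ^ 2 := mul_nonneg (by linarith) (sq_nonneg _)
  have P6 : q t * (4 * C) * (q t + h t) ≤ (q t + h t) ^ 2 := by
    calc q t * (4 * C) * (q t + h t) ≤ (q t + h t) * (q t + h t) :=
          mul_le_mul_of_nonneg_right hγ' hQ.le
    _ = (q t + h t) ^ 2 := by ring
  rw [hC] at P6
  nlinarith [P1, P2, P3, P4, P5, P6]
end

section
/- For every A ≥ 0 there exists γ ∈ (0, 1/2), depending only on A, with the following property. Let T > 0, k ∈ ℝ with |k| ≤ A, a : [0,T] → ℝ continuous with |a(t)| ≤ A for all t, and let q, w, h, r : [0,T] → ℝ be differentiable with q' = w, w' = (1/2)h + a·q + k·r, h' = 2a·w, r' = −k·w on [0,T]; assume q(t) ≥ 0, h(t) ≥ 0 and q(t)h(t) = w(t)² + r(t)² for all t ∈ [0,T], r(0) = −k·q(0), q(0) + h(0) > 0, h(0) ≥ (1−γ)(q(0)+h(0)), w(0) ≤ 0, and q(t) > 0 for all t ∈ [0,T). Then: (a) for all t ∈ [0,T), w(t) ≤ 0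 and 0 ≤ q(t)/(q(t)+h(t)) ≤ q(0)/(q(0)+h(0)) ≤ γ; (b) t ↦ q(t)/(q(t)+h(t)) is nonincreasing and t ↦ w(t)/(q(t)+h(t)) is nondecreasing on [0,T), so that w(0)/(q(0)+h(0)) ≤ w(t)/(q(t)+h(t)) ≤ 0 on [0,T); and (c) T ≤ 4√γ. -/
open Set

lemma wb_aux_ne (γ k qu : ℝ) (hq : 0 < qu) (hg0 : γ ≤ 1/100) (hγpos : 0 < γ)
    (hgk2 : γ*k^2 ≤ 1/100) (h1 : qu ≤ 2*γ*(qu + k^2*qu)) : False := by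
  nlinarith [mul_le_mul_of_nonneg_right hg0 hq.le, mul_le_mul_of_nonneg_right hgk2 hq.le]

lemma wb_aux_anti (A γ qu hu au : ℝ) (hA : 0 ≤ A) (hγpos : 0 < γ) (hg0 : γ ≤ 1/100)
    (hgA : γ*A ≤ 1/100) (hqu : 0 ≤ qu) (hsu : 0 < qu + hu)
    (hqle : qu ≤ 2*γ*(qu+hu)) (ha2 : au ≤ A) : 0 ≤ hu - 2*au*qu := by
  have h3 : au * qu ≤ A * qu := mul_le_mul_of_nonneg_right ha2 hqu
  have h4 : A * qu ≤ A * (2*γ*(qu + hu)) := mul_le_mul_of_nonneg_left hqle hA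
  have h5 : γ*A*(qu + hu) ≤ (1/100)*(qu + hu) := mul_le_mul_of_nonneg_right hgA hsu.le
  have h6 : γ*(qu + hu) ≤ (1/100)*(qu + hu) := mul_le_mul_of_nonneg_right hg0 hsu.le
  nlinarith [h3, h4, h5, h6, hqle]

set_option maxHeartbeats 1600000 in
lemma wb_aux_mono (A γ qu hu au k wu : ℝ) (hA : 0 ≤ A)
    (hγpos : 0 < γ) (hg0 : γ ≤ 1/100)
    (hvi : 0 ≤ (1-γ)^2/2 - γ*(1/2+A+A^2) - A*γ^2*(1+2*A^2))
    (hk2 : k^2 ≤ A^2) (hqu : 0 ≤ qu) (hhu : 0 ≤ hu) (hsu : 0 < qu + hu)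
    (hqle : qu ≤ γ*(qu + hu)) (ha1 : -A ≤ au) (ha2 : au ≤ A)
    (hw2u : wu^2 = qu * hu - k^2 * qu^2) :
    0 ≤ ((1/2)*hu + au*qu + k*(-(k*qu)))*(qu + hu) - wu*(wu + 2*au*wu) := by
  have hb3 : (1-γ)*(qu + hu) ≤ hu := by linarith
  have hc2 : ((1-γ)*(qu + hu))*((1-γ)*(qu + hu)) ≤ hu * hu :=
    mul_le_mul hb3 hb3 (by nlinarith [hsu.le, hg0]) hhu
  have hc1 : qu * hu ≤ γ*(qu + hu)^2 := by
    nlinarith [mul_le_mul_of_nonneg_right hqle hhu, hsu.le, hγpos.le, hqu]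
  have hc3 : qu * qu ≤ (γ*(qu + hu))*(γ*(qu + hu)) :=
    mul_le_mul hqle hqle hqu (by positivity)
  have hco : 1/2 + au + k^2 ≤ 1/2 + A + A^2 := by linarith
  have he1 : (1/2 + au + k^2) * (qu * hu) ≤ (1/2 + A + A^2) * (qu * hu) :=
    mul_le_mul_of_nonneg_right hco (mul_nonneg hqu hhu)
  have he2 : (1/2 + A + A^2) * (qu * hu) ≤ (1/2 + A + A^2) * (γ*(qu + hu)^2) :=
    mul_le_mul_of_nonneg_left hc1 (by positivity)
  have hf1 : -A * ((1+2*k^2)*qu^2) ≤ au * ((1+2*k^2)*qu^2) :=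
    mul_le_mul_of_nonneg_right ha1 (by positivity)
  have hf2 : (1+2*k^2)*qu^2 ≤ (1+2*A^2)*qu^2 :=
    mul_le_mul_of_nonneg_right (by nlinarith [hk2]) (sq_nonneg _)
  have hf3 : A*((1+2*k^2)*qu^2) ≤ A*((1+2*A^2)*qu^2) :=
    mul_le_mul_of_nonneg_left hf2 hA
  have hf4 : (1+2*A^2)*qu^2 ≤ (1+2*A^2)*(γ^2*(qu + hu)^2) := by
    apply mul_le_mul_of_nonneg_left ?_ (by positivity)
    nlinarith [hc3]
  have hf5 : A*((1+2*A^2)*qu^2) ≤ A*((1+2*A^2)*(γ^2*(qu + hu)^2)) :=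
    mul_le_mul_of_nonneg_left hf4 hA
  have hw2a : au * wu^2 = au * (qu * hu - k^2 * qu^2) := by rw [hw2u]
  nlinarith [hc2, he1, he2, hf1, hf3, hf5, hw2u, hw2a,
    mul_nonneg hvi (sq_nonneg (qu + hu))]

set_option maxHeartbeats 1600000 in
lemma wb_aux_c (A γ qu hu au k wu : ℝ) (hA : 0 ≤ A) (hγpos : 0 < γ) (hg0 : γ ≤ 1/100)
    (hgA : γ*A ≤ 1/100) (hgA2 : γ*A^2 ≤ 1/100) (hk2 : k^2 ≤ A^2)
    (hqu : 0 < qu) (hhu : 0 ≤ hu) (hsu : 0 < qu+hu) (hqle : qu ≤ γ*(qu+hu))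
    (ha1 : -A ≤ au) (ha2 : au ≤ A) (hw2u : wu^2 = qu*hu - k^2*qu^2) :
    0 ≤ hu - 2*au*qu ∧ (1/4)*(qu/(qu+hu)) ≤ (wu*(hu-2*au*qu)/(qu+hu)^2)^2 := by
  have hA2q : A^2 * qu ≤ A^2 * (γ*(qu + hu)) := mul_le_mul_of_nonneg_left hqle (sq_nonneg A)
  have hk2q : k^2 * qu ≤ A^2 * qu := mul_le_mul_of_nonneg_right hk2 hqu.le
  have hgA2s : γ*A^2*(qu + hu) ≤ (1/100)*(qu + hu) := mul_le_mul_of_nonneg_right hgA2 hsu.le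
  have hgAs : γ*A*(qu + hu) ≤ (1/100)*(qu + hu) := mul_le_mul_of_nonneg_right hgA hsu.le
  have hgs : γ*(qu + hu) ≤ (1/100)*(qu + hu) := mul_le_mul_of_nonneg_right hg0 hsu.le
  have hg1 : (3/4)*(qu + hu) ≤ hu - k^2*qu := by linarith [hk2q, hA2q, hgA2s, hgs, hqle]
  have h3 : au * qu ≤ A * qu := mul_le_mul_of_nonneg_right ha2 hqu.le
  have hAq : A * qu ≤ A * (γ*(qu + hu)) := mul_le_mul_of_nonneg_left hqle hA
  have hg2 : (3/4)*(qu + hu) ≤ hu - 2*au*qu := by linarith [h3, hAq, hgAs, hgs, hqle]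
  refine ⟨by linarith [hsu.le], ?_⟩
  have hL : (1/4)*(qu/(qu+hu)) = (1*qu)/(4*(qu+hu)) := div_mul_div_comm 1 4 qu (qu+hu)
  rw [hL, one_mul, div_pow, div_le_div_iff₀ (by positivity) (by positivity)]
  have hu1 : ((3/4)*(qu + hu))^2 ≤ (hu - 2*au*qu)^2 := by
    have hnn : (0:ℝ) ≤ (3/4)*(qu + hu) := by positivity
    nlinarith [mul_self_le_mul_self hnn hg2]
  have hu2 : ((3/4)*(qu + hu))*(((3/4)*(qu + hu))^2) ≤ (hu - k^2*qu)*((hu - 2*au*qu)^2) := by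
    apply mul_le_mul hg1 hu1 (by positivity)
    exact le_trans (by positivity) hg1
  have hu3 : qu * (((3/4)*(qu + hu))*(((3/4)*(qu + hu))^2))
      ≤ qu * ((hu - k^2*qu)*((hu - 2*au*qu)^2)) :=
    mul_le_mul_of_nonneg_left hu2 hqu.le
  have h4S : (0:ℝ) ≤ 4*(qu+hu) := by positivity
  have hscaled := mul_le_mul_of_nonneg_left hu3 h4S
  have hw2mul : wu^2*((hu-2*au*qu)^2*(4*(qu+hu)))
      = (qu*hu - k^2*qu^2)*((hu-2*au*qu)^2*(4*(qu+hu))) := by rw [hw2u]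
  nlinarith [hscaled, hw2mul, mul_nonneg hqu.le (sq_nonneg ((qu+hu)^2))]


set_option maxHeartbeats 2000000 in
/-- Behaviour near wave breaking: for every `A ≥ 0` there exists `γ ∈ (0,1/2)` such
that for any solution of the characteristic ODE system on `[0,T]` with data in the set
`κ_{1-γ}` (i.e. `h(0) ≥ (1-γ)(q(0)+h(0))`, `w(0) ≤ 0`, `r(0) = -k q(0)`) and `q > 0`
on `[0,T)`: (a) `w ≤ 0` and `q/(q+h)` stays below `q(0)/(q(0)+h(0)) ≤ γ`;
(b) `q/(q+h)` is nonincreasing and `w/(q+h)` is nondecreasing, with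
`w(0)/(q(0)+h(0)) ≤ w/(q+h) ≤ 0`; and (c) `T ≤ 4√γ`. -/
theorem wave_breaking_region_estimates :
    ∀ A : ℝ, 0 ≤ A → ∃ γ : ℝ, γ ∈ Set.Ioo (0:ℝ) (1/2) ∧
    ∀ (T k : ℝ), 0 < T → |k| ≤ A →
    ∀ a : ℝ → ℝ, ContinuousOn a (Set.Icc (0:ℝ) T) →
      (∀ t ∈ Set.Icc (0:ℝ) T, |a t| ≤ A) →
    ∀ q w h r : ℝ → ℝ,
    (∀ t ∈ Set.Icc (0:ℝ) T, HasDerivAt q (w t) t) →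
    (∀ t ∈ Set.Icc (0:ℝ) T, HasDerivAt w ((1/2) * h t + a t * q t + k * r t) t) →
    (∀ t ∈ Set.Icc (0:ℝ) T, HasDerivAt h (2 * a t * w t) t) →
    (∀ t ∈ Set.Icc (0:ℝ) T, HasDerivAt r (-(k * w t)) t) →
    (∀ t ∈ Set.Icc (0:ℝ) T, 0 ≤ q t ∧ 0 ≤ h t ∧ q t * h t = w t ^ 2 + r t ^ 2) →
    r 0 = -(k * q 0) →
    0 < q 0 + h 0 →
    (1 - γ) * (q 0 + h 0) ≤ h 0 →
    w 0 ≤ 0 →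
    (∀ t ∈ Set.Ico (0:ℝ) T, 0 < q t) →
    ((∀ t ∈ Set.Ico (0:ℝ) T, w t ≤ 0 ∧ 0 ≤ q t / (q t + h t) ∧
        q t / (q t + h t) ≤ q 0 / (q 0 + h 0) ∧ q 0 / (q 0 + h 0) ≤ γ) ∧
      (AntitoneOn (fun t => q t / (q t + h t)) (Set.Ico (0:ℝ) T) ∧
        MonotoneOn (fun t => w t / (q t + h t)) (Set.Ico (0:ℝ) T) ∧
        ∀ t ∈ Set.Ico (0:ℝ) T,
          w 0 / (q 0 + h 0) ≤ w t / (q t + h t) ∧ w t / (q t + h t) ≤ 0) ∧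
      T ≤ 4 * Real.sqrt γ) := by
  intro A hA
  have hA1 : (0:ℝ) < 1 + A := by linarith
  obtain ⟨γ, hγdef⟩ : ∃ γ : ℝ, γ = 1/(100*(1+A)^4) := ⟨_, rfl⟩
  have hγpos : 0 < γ := by rw [hγdef]; positivity
  have hB1 : (1:ℝ) ≤ (1+A)^4 := by nlinarith [pow_nonneg hA 2, pow_nonneg hA 3, pow_nonneg hA 4, sq_nonneg A]
  have hgB : γ * (1+A)^4 = 1/100 := by
    rw [hγdef]; field_simp
  have hAB : A ≤ (1+A)^4 := by nlinarith [pow_nonneg hA 2, pow_nonneg hA 3, pow_nonneg hA 4]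
  have hA2B : A^2 ≤ (1+A)^4 := by nlinarith [pow_nonneg hA 2, pow_nonneg hA 3, pow_nonneg hA 4]
  have hA3B : A^3 ≤ (1+A)^4 := by nlinarith [pow_nonneg hA 2, pow_nonneg hA 3, pow_nonneg hA 4]
  have hg0 : γ ≤ 1/100 := by nlinarith [mul_le_mul_of_nonneg_left hB1 hγpos.le]
  have hgA : γ * A ≤ 1/100 := by nlinarith [mul_le_mul_of_nonneg_left hAB hγpos.le]
  have hgA2 : γ * A^2 ≤ 1/100 := by nlinarith [mul_le_mul_of_nonneg_left hA2B hγpos.le]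
  have hgA3 : γ * A^3 ≤ 1/100 := by nlinarith [mul_le_mul_of_nonneg_left hA3B hγpos.le]
  have hγhalf : γ < 1/2 := by linarith
  have hvi : 0 ≤ (1-γ)^2/2 - γ*(1/2+A+A^2) - A*γ^2*(1+2*A^2) := by
    have q1 : γ*(γ*A) ≤ (1/100)*(1/100) :=
      mul_le_mul hg0 hgA (by positivity) (by norm_num)
    have q3 : γ*(γ*A^3) ≤ (1/100)*(1/100) :=
      mul_le_mul hg0 hgA3 (by positivity) (by norm_num)
    nlinarith [hg0, hgA, hgA2, q1, q3, sq_nonneg γ, hγpos.le]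
  refine ⟨γ, ⟨hγpos, hγhalf⟩, ?_⟩
  intro T k hT hk a hacont habd q w h r hq' hw' hh' hr' hqh hr0 hs0 hh0 hw0 hqpos
  have hsub : Ico (0:ℝ) T ⊆ Icc 0 T := Ico_subset_Icc_self
  have hk2 : k^2 ≤ A^2 := by
    have := abs_le.1 hk
    nlinarith only [this.1, this.2]
  have hspos : ∀ t ∈ Ico (0:ℝ) T, 0 < q t + h t := by
    intro t ht
    have h1 := hqpos t ht
    have h2 := (hqh t (hsub ht)).2.1
    linarith only [h1, h2]
  -- conserved quantity : r = -(k q)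
  have hrk : ∀ t ∈ Icc (0:ℝ) T, r t = -(k * q t) := by
    have key := constant_of_has_deriv_right_zero (f := fun u => r u + k * q u) (a := 0) (b := T)
      (fun t ht => ((hr' t ht).continuousAt.add ((hq' t ht).continuousAt.const_mul k)).continuousWithinAt)
      (fun x hx => by
        have h1 := (hr' x (hsub hx)).add ((hq' x (hsub hx)).const_mul k)
        have h2 : -(k * w x) + k * w x = 0 := by ring
        rw [h2] at h1
        exact h1.hasDerivWithinAt)
    intro t ht
    have := key t ht
    rw [hr0] at this
    linarith only [this]
  have hw2 : ∀ t ∈ Icc (0:ℝ) T, w t^2 = q t * h t - k^2 * q t^2 := by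
    intro t ht
    have h1 := (hqh t ht).2.2
    rw [hrk t ht] at h1
    linear_combination -h1
  have hscont : ∀ t ∈ Icc (0:ℝ) T, ContinuousAt (fun u => q u + h u) t :=
    fun t ht => (hq' t ht).continuousAt.add (hh' t ht).continuousAt
  have hβcont : ∀ t ∈ Icc (0:ℝ) T, q t + h t ≠ 0 →
      ContinuousAt (fun u => q u / (q u + h u)) t :=
    fun t ht hs => (hq' t ht).continuousAt.div (hscont t ht) hs
  have hβderiv : ∀ t ∈ Icc (0:ℝ) T, q t + h t ≠ 0 →
      HasDerivAt (fun u => q u / (q u + h u)) (w t * (h t - 2*a t*q t) / (q t + h t)^2) t := by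
    intro t ht hs
    have h1 : HasDerivAt (fun u => q u / (q u + h u))
        ((w t * (q t + h t) - q t * (w t + 2 * a t * w t)) / (q t + h t) ^ 2) t :=
      (hq' t ht).div ((hq' t ht).add (hh' t ht)) hs
    have h2 : (w t * (q t + h t) - q t * (w t + 2 * a t * w t)) / (q t + h t) ^ 2
        = w t * (h t - 2*a t*q t) / (q t + h t)^2 := by ring
    rwa [h2] at h1
  have h0Icc : (0:ℝ) ∈ Icc (0:ℝ) T := ⟨le_refl 0, hT.le⟩
  have h0Ico : (0:ℝ) ∈ Ico (0:ℝ) T := ⟨le_refl 0, hT⟩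
  have hβ0 : q 0 / (q 0 + h 0) ≤ γ := by
    rw [div_le_iff₀ hs0]; nlinarith only [hh0]
  -- w cannot vanish while q/(q+h) ≤ 2γ
  have hwne : ∀ t ∈ Ico (0:ℝ) T, q t / (q t + h t) ≤ 2*γ → w t ≠ 0 := by
    intro t ht hβ hw0'
    have hqt := hqpos t ht
    have hst := hspos t ht
    have hw2t := hw2 t (hsub ht)
    rw [hw0'] at hw2t
    have hht : h t = k^2 * q t := by
      have hz : q t * (h t - k^2 * q t) = 0 := by linear_combination -hw2t
      have := (mul_eq_zero.1 hz).resolve_left (ne_of_gt hqt)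
      linarith
    have h1 : q t ≤ 2*γ*(q t + h t) := (div_le_iff₀ hst).1 hβ
    rw [hht] at h1
    have hgk2 : γ * k^2 ≤ 1/100 := by nlinarith only [hk2, hγpos.le, hgA2]
    exact wb_aux_ne γ k (q t) hqt hg0 hγpos hgk2 h1
  -- β is antitone on convex subsets where w ≤ 0 and β ≤ 2γ
  have hbeta_anti : ∀ D : Set ℝ, Convex ℝ D → D ⊆ Ico (0:ℝ) T →
      (∀ u ∈ D, w u ≤ 0) → (∀ u ∈ D, q u / (q u + h u) ≤ 2*γ) →
      AntitoneOn (fun t => q t / (q t + h t)) D := by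
    intro D hconv hDsub hwD hβD
    have hint : interior D ⊆ D := interior_subset
    refine antitoneOn_of_deriv_nonpos hconv ?_ ?_ ?_
    · exact fun u hu =>
        (hβcont u (hsub (hDsub hu)) (ne_of_gt (hspos u (hDsub hu)))).continuousWithinAt
    · intro u hu
      exact (hβderiv u (hsub (hDsub (hint hu)))
        (ne_of_gt (hspos u (hDsub (hint hu))))).differentiableAt.differentiableWithinAt
    · intro u hu
      have huD := hint hu
      have huI := hDsub huD
      have hsu := hspos u huI
      rw [(hβderiv u (hsub huI) (ne_of_gt hsu)).deriv]
      have hq0u : 0 ≤ q u := (hqh u (hsub huI)).1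
      have hqle : q u ≤ 2*γ*(q u + h u) := (div_le_iff₀ hsu).1 (hβD u huD)
      have haA := abs_le.1 (habd u (hsub huI))
      have h2 : 0 ≤ h u - 2*a u*q u :=
        wb_aux_anti A γ (q u) (h u) (a u) hA hγpos hg0 hgA hq0u hsu hqle haA.2
      have hwu := hwD u huD
      have hnum : w u * (h u - 2*a u*q u) ≤ 0 := mul_nonpos_iff.2 (Or.inr ⟨hwu, h2⟩)
      exact div_nonpos_iff.2 (Or.inr ⟨hnum, sq_nonneg _⟩)
  -- master bootstrap
  have master : ∀ t ∈ Ico (0:ℝ) T, w t < 0 ∧ q t / (q t + h t) ≤ γ := by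
    by_contra hcon
    push_neg at hcon
    obtain ⟨t₁, ht₁, himp⟩ := hcon
    set Bd : Set ℝ := {u | u ∈ Icc 0 t₁ ∧ (0 ≤ w u ∨ γ < q u / (q u + h u))} with hBddef
    have ht₁Bd : t₁ ∈ Bd := by
      refine ⟨⟨ht₁.1, le_refl t₁⟩, ?_⟩
      by_cases hc : w t₁ < 0
      · exact Or.inr (himp hc)
      · exact Or.inl (not_lt.1 hc)
    have hBdne : Bd.Nonempty := ⟨t₁, ht₁Bd⟩
    have hBdbb : BddBelow Bd := ⟨0, fun u hu => hu.1.1⟩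
    set t₀ := sInf Bd with ht₀def
    have ht₀0 : 0 ≤ t₀ := le_csInf hBdne (fun u hu => hu.1.1)
    have ht₀1 : t₀ ≤ t₁ := csInf_le hBdbb ht₁Bd
    have ht₀Ico : t₀ ∈ Ico (0:ℝ) T := ⟨ht₀0, lt_of_le_of_lt ht₀1 ht₁.2⟩
    have ht₀Icc : t₀ ∈ Icc (0:ℝ) T := hsub ht₀Ico
    have hgood : ∀ u, 0 ≤ u → u < t₀ → w u < 0 ∧ q u / (q u + h u) ≤ γ := by
      intro u hu0 hut
      have hunot : u ∉ Bd := fun hmem => absurd (csInf_le hBdbb hmem) (not_le.2 hut)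
      have huIcc : u ∈ Icc 0 t₁ := ⟨hu0, le_of_lt (lt_of_lt_of_le hut ht₀1)⟩
      by_contra hcc
      apply hunot
      refine ⟨huIcc, ?_⟩
      rcases not_and_or.1 hcc with h1 | h2
      · exact Or.inl (not_lt.1 h1)
      · exact Or.inr (not_le.1 h2)
    have hwt₀le : w t₀ ≤ 0 := by
      rcases eq_or_lt_of_le ht₀0 with heq | hlt
      · rw [← heq]; exact hw0
      · by_contra hpos
        push_neg at hpos
        have hcw : ContinuousAt w t₀ := (hw' t₀ ht₀Icc).continuousAt
        have hev : {x | 0 < w x} ∈ nhds t₀ := hcw (Ioi_mem_nhds hpos)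
        obtain ⟨δ, hδpos, hδ⟩ := Metric.mem_nhds_iff.1 hev
        set u := max 0 (t₀ - δ/2) with hudef
        have hu0 : 0 ≤ u := le_max_left _ _
        have hult : u < t₀ := max_lt hlt (by linarith)
        have hu2 : t₀ - δ/2 ≤ u := le_max_right _ _
        have : 0 < w u := by
          apply hδ
          rw [Metric.mem_ball, Real.dist_eq, abs_lt]
          constructor <;> linarith
        exact absurd this (not_lt.2 (hgood u hu0 hult).1.le)
    have hβt₀le : q t₀ / (q t₀ + h t₀) ≤ γ := by
      rcases eq_or_lt_of_le ht₀0 with heq | hlt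
      · rw [← heq]; exact hβ0
      · by_contra hpos
        push_neg at hpos
        have hcβ : ContinuousAt (fun u => q u / (q u + h u)) t₀ :=
          hβcont t₀ ht₀Icc (ne_of_gt (hspos t₀ ht₀Ico))
        have hev : {x | γ < q x / (q x + h x)} ∈ nhds t₀ := hcβ (Ioi_mem_nhds hpos)
        obtain ⟨δ, hδpos, hδ⟩ := Metric.mem_nhds_iff.1 hev
        set u := max 0 (t₀ - δ/2) with hudef
        have hu0 : 0 ≤ u := le_max_left _ _
        have hult : u < t₀ := max_lt hlt (by linarith)
        have hu2 : t₀ - δ/2 ≤ u := le_max_right _ _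
        have : γ < q u / (q u + h u) := by
          apply hδ
          rw [Metric.mem_ball, Real.dist_eq, abs_lt]
          constructor <;> linarith
        exact absurd this (not_lt.2 (hgood u hu0 hult).2)
    have hwt₀ : w t₀ < 0 :=
      lt_of_le_of_ne hwt₀le (hwne t₀ ht₀Ico (by linarith only [hβt₀le, hγpos.le]))
    have hcw : ContinuousAt w t₀ := (hw' t₀ ht₀Icc).continuousAt
    have hev1 : {x | w x < 0} ∈ nhds t₀ := hcw (Iio_mem_nhds hwt₀)
    have hcβ : ContinuousAt (fun u => q u / (q u + h u)) t₀ :=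
      hβcont t₀ ht₀Icc (ne_of_gt (hspos t₀ ht₀Ico))
    have hev2 : {x | q x / (q x + h x) < 2*γ} ∈ nhds t₀ := hcβ (Iio_mem_nhds (by linarith only [hβt₀le, hγpos]))
    obtain ⟨δ₁, hδ₁, hd1⟩ := Metric.mem_nhds_iff.1 hev1
    obtain ⟨δ₂, hδ₂, hd2⟩ := Metric.mem_nhds_iff.1 hev2
    set δ := min δ₁ δ₂ with hδdef
    have hδpos : 0 < δ := lt_min hδ₁ hδ₂
    obtain ⟨x, hxBd, hxlt⟩ := exists_lt_of_csInf_lt hBdne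
      (show sInf Bd < t₀ + δ by rw [← ht₀def]; linarith)
    have hxt₀ : t₀ ≤ x := csInf_le hBdbb hxBd
    have hxI : x ∈ Icc 0 t₁ := hxBd.1
    have hxT : x < T := lt_of_le_of_lt hxI.2 ht₁.2
    have hnear : ∀ u, t₀ ≤ u → u ≤ x → w u < 0 ∧ q u / (q u + h u) ≤ 2*γ := by
      intro u h1 h2
      have hb1 : u ∈ Metric.ball t₀ δ₁ := by
        rw [Metric.mem_ball, Real.dist_eq, abs_lt]
        constructor
        · have := min_le_left δ₁ δ₂; linarith
        · have := min_le_left δ₁ δ₂; linarith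
      have hb2 : u ∈ Metric.ball t₀ δ₂ := by
        rw [Metric.mem_ball, Real.dist_eq, abs_lt]
        constructor
        · have := min_le_right δ₁ δ₂; linarith
        · have := min_le_right δ₁ δ₂; linarith
      exact ⟨hd1 hb1, (hd2 hb2).le⟩
    have hWall : ∀ u ∈ Icc (0:ℝ) x, w u ≤ 0 := by
      intro u hu
      rcases lt_or_ge u t₀ with hc | hc
      · exact (hgood u hu.1 hc).1.le
      · exact (hnear u hc hu.2).1.le
    have hBall : ∀ u ∈ Icc (0:ℝ) x, q u / (q u + h u) ≤ 2*γ := by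
      intro u hu
      rcases lt_or_ge u t₀ with hc | hc
      · linarith only [(hgood u hu.1 hc).2, hγpos]
      · exact (hnear u hc hu.2).2
    have hanti := hbeta_anti (Icc 0 x) (convex_Icc 0 x)
      (fun u hu => ⟨hu.1, lt_of_le_of_lt hu.2 hxT⟩) hWall hBall
    have hx0 : (0:ℝ) ≤ x := le_trans ht₀0 hxt₀
    have hβx : q x / (q x + h x) ≤ q 0 / (q 0 + h 0) :=
      hanti ⟨le_refl 0, hx0⟩ ⟨hx0, le_refl x⟩ hx0
    rcases hxBd.2 with hc | hc
    · exact absurd hc (not_le.2 (hnear x hxt₀ (le_refl x)).1)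
    · exact absurd hc (not_lt.2 (le_trans hβx hβ0))
  -- antitonicity of β on all of [0,T)
  have hanti : AntitoneOn (fun t => q t / (q t + h t)) (Ico (0:ℝ) T) :=
    hbeta_anti _ (convex_Ico 0 T) (subset_refl _)
      (fun u hu => (master u hu).1.le) (fun u hu => by linarith only [(master u hu).2, hγpos])
  -- part (b): monotonicity of w/(q+h)
  have hαderiv : ∀ t ∈ Icc (0:ℝ) T, q t + h t ≠ 0 →
      HasDerivAt (fun u => w u / (q u + h u))
        ((((1/2)*h t + a t*q t + k*r t)*(q t + h t) - w t*(w t + 2*a t*w t))/(q t + h t)^2) t :=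
    fun t ht hs => (hw' t ht).div ((hq' t ht).add (hh' t ht)) hs
  have hmono : MonotoneOn (fun t => w t / (q t + h t)) (Ico (0:ℝ) T) := by
    refine monotoneOn_of_deriv_nonneg (convex_Ico 0 T) ?_ ?_ ?_
    · exact fun u hu =>
        ((hw' u (hsub hu)).continuousAt.div (hscont u (hsub hu))
          (ne_of_gt (hspos u hu))).continuousWithinAt
    · rw [interior_Ico]
      intro u hu
      have huI : u ∈ Ico (0:ℝ) T := Ioo_subset_Ico_self hu
      exact (hαderiv u (hsub huI) (ne_of_gt (hspos u huI))).differentiableAt.differentiableWithinAt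
    · rw [interior_Ico]
      intro u hu
      have huI : u ∈ Ico (0:ℝ) T := Ioo_subset_Ico_self hu
      have hsu := hspos u huI
      rw [(hαderiv u (hsub huI) (ne_of_gt hsu)).deriv]
      apply div_nonneg ?_ (sq_nonneg _)
      have hrku := hrk u (hsub huI)
      have hw2u := hw2 u (hsub huI)
      have hqu : 0 ≤ q u := (hqh u (hsub huI)).1
      have hhu : 0 ≤ h u := (hqh u (hsub huI)).2.1
      have hβu := (master u huI).2
      have hqle : q u ≤ γ*(q u + h u) := (div_le_iff₀ hsu).1 hβu
      have haA := abs_le.1 (habd u (hsub huI))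
      rw [hrku]
      exact wb_aux_mono A γ (q u) (h u) (a u) k (w u) hA hγpos hg0 hvi hk2 hqu hhu hsu hqle
        haA.1 haA.2 hw2u
  -- part (c)
  have hsqrt_anti : AntitoneOn (fun t => Real.sqrt (q t / (q t + h t)) + t/4) (Ico (0:ℝ) T) := by
    refine antitoneOn_of_deriv_nonpos (convex_Ico 0 T) ?_ ?_ ?_
    · intro u hu
      have hc := hβcont u (hsub hu) (ne_of_gt (hspos u hu))
      exact ((Real.continuous_sqrt.continuousAt.comp hc).add
        ((continuousAt_id).div_const 4)).continuousWithinAt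
    all_goals rw [interior_Ico]
    · intro u hu
      have huI : u ∈ Ico (0:ℝ) T := Ioo_subset_Ico_self hu
      have hβupos : 0 < q u / (q u + h u) := div_pos (hqpos u huI) (hspos u huI)
      have hd := ((Real.hasDerivAt_sqrt (ne_of_gt hβupos)).comp u
        (hβderiv u (hsub huI) (ne_of_gt (hspos u huI)))).add ((hasDerivAt_id u).div_const 4)
      have hd' : HasDerivAt (fun t => Real.sqrt (q t / (q t + h t)) + t/4)
          (1/(2*Real.sqrt (q u / (q u + h u))) * (w u * (h u - 2*a u*q u) / (q u + h u)^2)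
            + 1/4) u := hd
      exact hd'.differentiableAt.differentiableWithinAt
    · intro u hu
      have huI : u ∈ Ico (0:ℝ) T := Ioo_subset_Ico_self hu
      have hsu := hspos u huI
      have hqupos := hqpos u huI
      have hβupos : 0 < q u / (q u + h u) := div_pos hqupos hsu
      have hd := ((Real.hasDerivAt_sqrt (ne_of_gt hβupos)).comp u
        (hβderiv u (hsub huI) (ne_of_gt hsu))).add ((hasDerivAt_id u).div_const 4)
      have hd' : HasDerivAt (fun t => Real.sqrt (q t / (q t + h t)) + t/4)
          (1/(2*Real.sqrt (q u / (q u + h u))) * (w u * (h u - 2*a u*q u) / (q u + h u)^2)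
            + 1/4) u := hd
      rw [hd'.deriv]
      -- derivative bound
      have hw2u := hw2 u (hsub huI)
      have hqu : 0 ≤ q u := hqupos.le
      have hβu := (master u huI).2
      have hwu : w u < 0 := (master u huI).1
      have hqle : q u ≤ γ*(q u + h u) := (div_le_iff₀ hsu).1 hβu
      have haA := abs_le.1 (habd u (hsub huI))
      have hhu0 : 0 ≤ h u := (hqh u (hsub huI)).2.1
      obtain ⟨hfac, hkey⟩ := wb_aux_c A γ (q u) (h u) (a u) k (w u) hA hγpos hg0 hgA hgA2
        hk2 hqupos hhu0 hsu hqle haA.1 haA.2 hw2u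
      have hL0 : 0 ≤ -(w u * (h u - 2*a u*q u) / (q u + h u)^2) := by
        have hnum : w u * (h u - 2*a u*q u) ≤ 0 := mul_nonpos_iff.2 (Or.inr ⟨hwu.le, hfac⟩)
        have := div_nonpos_iff.2 (Or.inr ⟨hnum, sq_nonneg (q u + h u)⟩)
        linarith only [this]
      have hR0 : 0 ≤ (1/2) * Real.sqrt (q u / (q u + h u)) := by positivity
      have hsq : Real.sqrt (q u / (q u + h u))^2 = q u / (q u + h u) :=
        Real.sq_sqrt hβupos.le
      have hsqineq : ((1/2) * Real.sqrt (q u / (q u + h u)))^2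
          ≤ (-(w u * (h u - 2*a u*q u) / (q u + h u)^2))^2 := by
        have hexp : ((1/2) * Real.sqrt (q u / (q u + h u)))^2 = (1/4) * (q u / (q u + h u)) := by
          rw [mul_pow, hsq]; ring
        have hneg : (-(w u * (h u - 2*a u*q u) / (q u + h u)^2))^2
            = (w u * (h u - 2*a u*q u) / (q u + h u)^2)^2 := by ring
        rw [hexp, hneg]; exact hkey
      have hRL : (1/2) * Real.sqrt (q u / (q u + h u))
          ≤ -(w u * (h u - 2*a u*q u) / (q u + h u)^2) := by
        have := Real.sqrt_le_sqrt hsqineq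
        rwa [Real.sqrt_sq hR0, Real.sqrt_sq hL0] at this
      have hm : 0 < Real.sqrt (q u / (q u + h u)) := Real.sqrt_pos.2 hβupos
      have hmul : 1/(2*Real.sqrt (q u / (q u + h u))) * (w u * (h u - 2*a u*q u) / (q u + h u)^2)
          ≤ 1/(2*Real.sqrt (q u / (q u + h u))) * (-((1/2) * Real.sqrt (q u / (q u + h u)))) := by
        apply mul_le_mul_of_nonneg_left (by linarith only [hRL]) (by positivity)
      have hid : 1/(2*Real.sqrt (q u / (q u + h u))) * (-((1/2) * Real.sqrt (q u / (q u + h u))))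
          = -(1/4) := by
        field_simp
        ring
      linarith only [hmul, hid]
  -- assemble
  refine ⟨?_, ⟨hanti, hmono, ?_⟩, ?_⟩
  · intro t ht
    exact ⟨(master t ht).1.le,
      div_nonneg (hqh t (hsub ht)).1 (hspos t ht).le,
      hanti h0Ico ht ht.1, hβ0⟩
  · intro t ht
    constructor
    · exact hmono h0Ico ht ht.1
    · exact div_nonpos_iff.2 (Or.inr ⟨(master t ht).1.le, (hspos t ht).le⟩)
  · by_contra hTT
    push_neg at hTT
    have hsγ : 0 ≤ 4 * Real.sqrt γ := by positivity
    have htmem : 4 * Real.sqrt γ ∈ Ico (0:ℝ) T := ⟨hsγ, hTT⟩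
    have h1 := hsqrt_anti h0Ico htmem hsγ
    simp only at h1
    have h2 : Real.sqrt (q 0 / (q 0 + h 0)) ≤ Real.sqrt γ := Real.sqrt_le_sqrt hβ0
    have h3 : 0 < Real.sqrt (q (4*Real.sqrt γ) / (q (4*Real.sqrt γ) + h (4*Real.sqrt γ))) :=
      Real.sqrt_pos.2 (div_pos (hqpos _ htmem) (hspos _ htmem))
    linarith only [h1, h2, h3]
end

section
/- For every M > 0 there exists a constant C > 0 with the following property. Let v₁, v₂, ρ̄₁, ρ̄₂ ∈ L²(ℝ) with ‖v₁‖_{L²}, ‖v₂‖_{L²}, ‖ρ̄₁‖_{L²}, ‖ρ̄₂‖_{L²} ≤ M, let k₁, k₂ ∈ ℝ, set ρᵢ = ρ̄ᵢ + kᵢ, and define Gᵢ : ℝ → ℝ pointwise by Gᵢ(x) = |vᵢ(x)| + 2|kᵢ ρ̄ᵢ(x)| + 2 if |vᵢ(x)| + 2|kᵢ ρ̄ᵢ(x)| + 2 ≤ 1 + vᵢ(x)² + ρ̄ᵢ(x)², vᵢ(x) ≤ 0 and ρᵢ(x) = 0 hold simultaneously, and Gᵢ(x) = 1 + vᵢ(x)²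 + ρ̄ᵢ(x)² otherwise. Assume that the set {x : ρ₁(x) = 0 and ρ₂(x) ≠ 0} ∪ {x : ρ₁(x) ≠ 0 and ρ₂(x) = 0} has Lebesgue measure zero. Then ‖G₁ − G₂‖_{L¹(ℝ)} ≤ C·( ‖v₁ − v₂‖_{L²} + ‖ρ̄₁ − ρ̄₂‖_{L²} ). -/
open MeasureTheory

set_option maxHeartbeats 1000000 in
open Classical in
lemma gbound_one_sided (v₁ v₂ r₁ r₂ k₁ k₂ : ℝ) (hk : (r₁ + k₁ = 0) ↔ (r₂ + k₂ = 0)) :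
    (if |v₁| + 2 * |k₁ * r₁| + 2 ≤ 1 + v₁ ^ 2 + r₁ ^ 2 ∧ v₁ ≤ 0 ∧ r₁ + k₁ = 0
      then |v₁| + 2 * |k₁ * r₁| + 2 else 1 + v₁ ^ 2 + r₁ ^ 2)
    - (if |v₂| + 2 * |k₂ * r₂| + 2 ≤ 1 + v₂ ^ 2 + r₂ ^ 2 ∧ v₂ ≤ 0 ∧ r₂ + k₂ = 0
      then |v₂| + 2 * |k₂ * r₂| + 2 else 1 + v₂ ^ 2 + r₂ ^ 2)
    ≤ 2 * ((|v₁| + |v₂|) * |v₁ - v₂|) + 2 * ((|r₁| + |r₂|) * |r₁ - r₂|) := by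
  have hDv0 : (0:ℝ) ≤ |v₁ - v₂| := abs_nonneg _
  have hDr0 : (0:ℝ) ≤ |r₁ - r₂| := abs_nonneg _
  have hv10 : (0:ℝ) ≤ |v₁| := abs_nonneg _
  have hv20 : (0:ℝ) ≤ |v₂| := abs_nonneg _
  have hr10 : (0:ℝ) ≤ |r₁| := abs_nonneg _
  have hr20 : (0:ℝ) ≤ |r₂| := abs_nonneg _
  have hsv : |v₁| - |v₂| ≤ |v₁ - v₂| := abs_sub_abs_le_abs_sub _ _
  have hsv' : |v₂| - |v₁| ≤ |v₁ - v₂| := by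
    have := abs_sub_abs_le_abs_sub v₂ v₁; rwa [abs_sub_comm] at this
  have hsr : |r₁| - |r₂| ≤ |r₁ - r₂| := abs_sub_abs_le_abs_sub _ _
  have hsr' : |r₂| - |r₁| ≤ |r₁ - r₂| := by
    have := abs_sub_abs_le_abs_sub r₂ r₁; rwa [abs_sub_comm] at this
  have hq1 : |v₁| ^ 2 = v₁ ^ 2 := sq_abs _
  have hq2 : |v₂| ^ 2 = v₂ ^ 2 := sq_abs _
  have hqr1 : |r₁| ^ 2 = r₁ ^ 2 := sq_abs _
  have hqr2 : |r₂| ^ 2 = r₂ ^ 2 := sq_abs _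
  have hvv1 : v₁ ≤ |v₁| := le_abs_self _
  have hvv1' : -|v₁| ≤ v₁ := neg_abs_le _
  have hvv2 : v₂ ≤ |v₂| := le_abs_self _
  have hvv2' : -|v₂| ≤ v₂ := neg_abs_le _
  have hvd : v₁ - v₂ ≤ |v₁ - v₂| := le_abs_self _
  have hvd' : v₂ - v₁ ≤ |v₁ - v₂| := by have := neg_abs_le (v₁ - v₂); linarith
  split_ifs with h1 h2 h2
  · -- both conditions hold
    obtain ⟨hi1, hn1, hz1⟩ := h1
    obtain ⟨hi2, hn2, hz2⟩ := h2
    have e1 : |k₁ * r₁| = r₁ ^ 2 := by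
      have : k₁ = -r₁ := by linarith
      rw [this, neg_mul, abs_neg, abs_mul_self, sq]
    have e2 : |k₂ * r₂| = r₂ ^ 2 := by
      have : k₂ = -r₂ := by linarith
      rw [this, neg_mul, abs_neg, abs_mul_self, sq]
    rw [e1] at hi1 ⊢
    rw [e2] at hi2 ⊢
    have hA : 1 ≤ |v₁| := by nlinarith [sq_nonneg r₁]
    nlinarith [mul_nonneg (add_nonneg hv10 hv20) hDv0,
      mul_nonneg (add_nonneg hr10 hr20) hDr0,
      mul_nonneg (add_nonneg hr10 hr20) (sub_nonneg.2 hsr),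
      mul_nonneg (sub_nonneg.2 hA) hDv0]
  · -- first condition holds, second fails
    obtain ⟨hi1, hn1, hz1⟩ := h1
    have e1 : |k₁ * r₁| = r₁ ^ 2 := by
      have : k₁ = -r₁ := by linarith
      rw [this, neg_mul, abs_neg, abs_mul_self, sq]
    rw [e1] at hi1 ⊢
    nlinarith [mul_nonneg (add_nonneg hv10 hv20) hDv0,
      mul_nonneg (add_nonneg hr10 hr20) hDr0,
      mul_nonneg (add_nonneg hv10 hv20) (sub_nonneg.2 hsv),
      mul_nonneg (add_nonneg hr10 hr20) (sub_nonneg.2 hsr)]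
  · -- first fails, second holds
    obtain ⟨hi2, hn2, hz2⟩ := h2
    have hz1 : r₁ + k₁ = 0 := hk.mpr hz2
    have e1 : |k₁ * r₁| = r₁ ^ 2 := by
      have : k₁ = -r₁ := by linarith
      rw [this, neg_mul, abs_neg, abs_mul_self, sq]
    have e2 : |k₂ * r₂| = r₂ ^ 2 := by
      have : k₂ = -r₂ := by linarith
      rw [this, neg_mul, abs_neg, abs_mul_self, sq]
    rw [e2] at hi2 ⊢
    rw [e1] at h1
    have hA2 : 1 ≤ |v₂| := by nlinarith [sq_nonneg r₂]
    have hR : r₁ ^ 2 - r₂ ^ 2 ≤ (|r₁| + |r₂|) * |r₁ - r₂| := by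
      nlinarith [mul_nonneg (add_nonneg hr10 hr20) (sub_nonneg.2 hsr)]
    have hBD : 0 ≤ (|r₁| + |r₂|) * |r₁ - r₂| :=
      mul_nonneg (add_nonneg hr10 hr20) hDr0
    have hAD : 0 ≤ (|v₁| + |v₂|) * |v₁ - v₂| :=
      mul_nonneg (add_nonneg hv10 hv20) hDv0
    have h1' : ¬ (|v₁| + 2 * r₁ ^ 2 + 2 ≤ 1 + v₁ ^ 2 + r₁ ^ 2) ∨ ¬ (v₁ ≤ 0) := by
      by_contra hcon
      push_neg at hcon
      exact h1 ⟨hcon.1, hcon.2, hz1⟩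
    have hDA : |v₁ - v₂| ≤ (|v₁| + |v₂|) * |v₁ - v₂| := by
      nlinarith [mul_nonneg (sub_nonneg.2 (le_trans hA2 (by linarith : |v₂| ≤ |v₁| + |v₂|))) hDv0]
    rcases h1' with hi1 | hp1
    · push_neg at hi1
      linarith [hR, hBD, hAD, hsv, hDA]
    · push_neg at hp1
      have hDv : |v₁| + |v₂| ≤ |v₁ - v₂| := by
        have h2' : v₂ = -|v₂| := by
          rcases abs_cases v₂ with h | h <;> linarith
        have h1'' : v₁ = |v₁| := by
          rcases abs_cases v₁ with h | h <;> linarith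
        linarith
      have hq : v₁ ^ 2 ≤ |v₁| * |v₁ - v₂| := by
        nlinarith [mul_nonneg hv10 (sub_nonneg.2 (show |v₁| ≤ |v₁ - v₂| by linarith))]
      have hq' : |v₁| * |v₁ - v₂| ≤ (|v₁| + |v₂|) * |v₁ - v₂| := by
        nlinarith [mul_nonneg hv20 hDv0]
      linarith [hR, hBD, hAD, sq_nonneg r₂]
  · -- both fail
    have hR : r₁ ^ 2 - r₂ ^ 2 ≤ (|r₁| + |r₂|) * |r₁ - r₂| := by
      nlinarith [mul_nonneg (add_nonneg hr10 hr20) (sub_nonneg.2 hsr)]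
    have hV : v₁ ^ 2 - v₂ ^ 2 ≤ (|v₁| + |v₂|) * |v₁ - v₂| := by
      nlinarith [mul_nonneg (add_nonneg hv10 hv20) (sub_nonneg.2 hsv)]
    have hBD : 0 ≤ (|r₁| + |r₂|) * |r₁ - r₂| :=
      mul_nonneg (add_nonneg hr10 hr20) hDr0
    have hAD : 0 ≤ (|v₁| + |v₂|) * |v₁ - v₂| :=
      mul_nonneg (add_nonneg hv10 hv20) hDv0
    linarith

lemma eLpNorm_abs_real (f : ℝ → ℝ) (p : ENNReal) :
    eLpNorm (fun x => |f x|) p (volume : Measure ℝ) = eLpNorm f p volume :=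
  eLpNorm_norm f

open Classical in
/-- Lipschitz estimate in `L¹` for the Eulerian function `g`: for every `M > 0` there
is a constant `C > 0` such that for data `(vᵢ, ρ̄ᵢ, kᵢ)` with `L²` norms at most `M`
and with `{ρ₁ = 0} Δ {ρ₂ = 0}` of measure zero (where `ρᵢ = ρ̄ᵢ + kᵢ`),
`‖G₁ - G₂‖_{L¹} ≤ C (‖v₁ - v₂‖_{L²} + ‖ρ̄₁ - ρ̄₂‖_{L²})`. -/
theorem eulerian_g_L1_lipschitz :
    ∀ M : ℝ, 0 < M → ∃ C : ℝ, 0 < C ∧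
    ∀ (v₁ v₂ ρ₁ ρ₂ : ℝ → ℝ) (k₁ k₂ : ℝ) (G₁ G₂ : ℝ → ℝ),
    MemLp v₁ 2 volume → MemLp v₂ 2 volume →
    MemLp ρ₁ 2 volume → MemLp ρ₂ 2 volume →
    (eLpNorm v₁ 2 volume).toReal ≤ M → (eLpNorm v₂ 2 volume).toReal ≤ M →
    (eLpNorm ρ₁ 2 volume).toReal ≤ M → (eLpNorm ρ₂ 2 volume).toReal ≤ M →
    (∀ x : ℝ,
      G₁ x = if |v₁ x| + 2 * |k₁ * ρ₁ x| + 2 ≤ 1 + (v₁ x) ^ 2 + (ρ₁ x) ^ 2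
                ∧ v₁ x ≤ 0 ∧ ρ₁ x + k₁ = 0
              then |v₁ x| + 2 * |k₁ * ρ₁ x| + 2
              else 1 + (v₁ x) ^ 2 + (ρ₁ x) ^ 2) →
    (∀ x : ℝ,
      G₂ x = if |v₂ x| + 2 * |k₂ * ρ₂ x| + 2 ≤ 1 + (v₂ x) ^ 2 + (ρ₂ x) ^ 2
                ∧ v₂ x ≤ 0 ∧ ρ₂ x + k₂ = 0
              then |v₂ x| + 2 * |k₂ * ρ₂ x| + 2
              else 1 + (v₂ x) ^ 2 + (ρ₂ x) ^ 2) →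
    volume ({x | ρ₁ x + k₁ = 0 ∧ ρ₂ x + k₂ ≠ 0}
        ∪ {x | ρ₁ x + k₁ ≠ 0 ∧ ρ₂ x + k₂ = 0}) = 0 →
    eLpNorm (fun x => G₁ x - G₂ x) 1 volume ≤
      ENNReal.ofReal (C * ((eLpNorm (fun x => v₁ x - v₂ x) 2 volume).toReal
        + (eLpNorm (fun x => ρ₁ x - ρ₂ x) 2 volume).toReal)) := by
  intro M hM
  refine ⟨4 * M, by positivity, ?_⟩
  intro v₁ v₂ ρ₁ ρ₂ k₁ k₂ G₁ G₂ hv₁ hv₂ hρ₁ hρ₂ hMv₁ hMv₂ hMρ₁ hMρ₂ hG₁ hG₂ hzero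
  -- a.e. equivalence of the zero sets
  have hae : ∀ᵐ x : ℝ ∂(volume : Measure ℝ), ((ρ₁ x + k₁ = 0) ↔ (ρ₂ x + k₂ = 0)) := by
    rw [MeasureTheory.ae_iff]
    refine measure_mono_null ?_ hzero
    intro x hx
    simp only [Set.mem_setOf_eq, Set.mem_union] at hx ⊢
    tauto
  -- pointwise bound
  set Sv : ℝ → ℝ := fun x => |v₁ x| + |v₂ x| with hSv
  set Sr : ℝ → ℝ := fun x => |ρ₁ x| + |ρ₂ x| with hSr
  set Dv : ℝ → ℝ := fun x => |v₁ x - v₂ x| with hDv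
  set Dr : ℝ → ℝ := fun x => |ρ₁ x - ρ₂ x| with hDr
  have hpt : ∀ᵐ x : ℝ ∂(volume : Measure ℝ),
      ‖G₁ x - G₂ x‖ ≤ ‖(fun x => 2 * (Sv x * Dv x) + 2 * (Sr x * Dr x)) x‖ := by
    filter_upwards [hae] with x hx
    have h₁ := gbound_one_sided (v₁ x) (v₂ x) (ρ₁ x) (ρ₂ x) k₁ k₂ hx
    have h₂ := gbound_one_sided (v₂ x) (v₁ x) (ρ₂ x) (ρ₁ x) k₂ k₁ hx.symm
    rw [abs_sub_comm (v₂ x) (v₁ x), abs_sub_comm (ρ₂ x) (ρ₁ x)] at h₂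
    simp only [Real.norm_eq_abs]
    rw [hG₁ x, hG₂ x]
    have hnn : (0:ℝ) ≤ 2 * (Sv x * Dv x) + 2 * (Sr x * Dr x) := by
      have := abs_nonneg (v₁ x); have := abs_nonneg (v₂ x)
      have := abs_nonneg (ρ₁ x); have := abs_nonneg (ρ₂ x)
      have := abs_nonneg (v₁ x - v₂ x); have := abs_nonneg (ρ₁ x - ρ₂ x)
      simp only [hSv, hSr, hDv, hDr]
      positivity
    rw [abs_of_nonneg hnn, abs_le]
    constructor
    · simp only [hSv, hSr, hDv, hDr]
      nlinarith [h₂, mul_comm ((|v₂ x| + |v₁ x|)) (|v₁ x - v₂ x|)]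
    · simp only [hSv, hSr, hDv, hDr]
      linarith [h₁]
  -- measurability facts
  have mS_v : AEStronglyMeasurable Sv volume := by
    have h1 : AEStronglyMeasurable (fun x => |v₁ x|) volume := by
      simpa [Real.norm_eq_abs] using hv₁.1.norm
    have h2 : AEStronglyMeasurable (fun x => |v₂ x|) volume := by
      simpa [Real.norm_eq_abs] using hv₂.1.norm
    exact h1.add h2
  have mS_r : AEStronglyMeasurable Sr volume := by
    have h1 : AEStronglyMeasurable (fun x => |ρ₁ x|) volume := by
      simpa [Real.norm_eq_abs] using hρ₁.1.norm
    have h2 : AEStronglyMeasurable (fun x => |ρ₂ x|) volume := by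
      simpa [Real.norm_eq_abs] using hρ₂.1.norm
    exact h1.add h2
  have mD_v : AEStronglyMeasurable Dv volume := by
    simpa [Real.norm_eq_abs] using (hv₁.1.sub hv₂.1).norm
  have mD_r : AEStronglyMeasurable Dr volume := by
    simpa [Real.norm_eq_abs] using (hρ₁.1.sub hρ₂.1).norm
  have hpq : (1 : ENNReal) / 1 = 1 / 2 + 1 / 2 := by
    rw [ENNReal.add_halves, div_one]
  -- L² norms
  set Nv₁ := eLpNorm v₁ 2 volume
  set Nv₂ := eLpNorm v₂ 2 volume
  set Nr₁ := eLpNorm ρ₁ 2 volume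
  set Nr₂ := eLpNorm ρ₂ 2 volume
  set Ev := eLpNorm (fun x => v₁ x - v₂ x) 2 volume with hEv
  set Er := eLpNorm (fun x => ρ₁ x - ρ₂ x) 2 volume with hEr
  have hEvD : eLpNorm Dv 2 volume = Ev := by
    rw [hEv]; exact eLpNorm_abs_real (fun x => v₁ x - v₂ x) 2
  have hErD : eLpNorm Dr 2 volume = Er := by
    rw [hEr]; exact eLpNorm_abs_real (fun x => ρ₁ x - ρ₂ x) 2
  have hSv2 : eLpNorm Sv 2 volume ≤ Nv₁ + Nv₂ := by
    refine le_trans (eLpNorm_add_le ?_ ?_ one_le_two) ?_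
    · simpa [Real.norm_eq_abs] using hv₁.1.norm
    · simpa [Real.norm_eq_abs] using hv₂.1.norm
    · rw [eLpNorm_abs_real, eLpNorm_abs_real]
  have hSr2 : eLpNorm Sr 2 volume ≤ Nr₁ + Nr₂ := by
    refine le_trans (eLpNorm_add_le ?_ ?_ one_le_two) ?_
    · simpa [Real.norm_eq_abs] using hρ₁.1.norm
    · simpa [Real.norm_eq_abs] using hρ₂.1.norm
    · rw [eLpNorm_abs_real, eLpNorm_abs_real]
  -- main chain
  have step1 : eLpNorm (fun x => G₁ x - G₂ x) 1 volume ≤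
      eLpNorm (fun x => 2 * (Sv x * Dv x) + 2 * (Sr x * Dr x)) 1 volume :=
    eLpNorm_mono_ae hpt
  have mA : AEStronglyMeasurable (fun x => 2 * (Sv x * Dv x)) volume :=
    ((mS_v.mul mD_v).const_mul 2)
  have mB : AEStronglyMeasurable (fun x => 2 * (Sr x * Dr x)) volume :=
    ((mS_r.mul mD_r).const_mul 2)
  have step2 : eLpNorm (fun x => 2 * (Sv x * Dv x) + 2 * (Sr x * Dr x)) 1 volume ≤
      eLpNorm (fun x => 2 * (Sv x * Dv x)) 1 volume
        + eLpNorm (fun x => 2 * (Sr x * Dr x)) 1 volume :=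
    eLpNorm_add_le mA mB le_rfl
  have htwo : ((‖(2:ℝ)‖₊ : NNReal) : ENNReal) = 2 := by
    simp
  have step3v : eLpNorm (fun x => 2 * (Sv x * Dv x)) 1 volume ≤
      2 * ((Nv₁ + Nv₂) * Ev) := by
    have e : eLpNorm (fun x => 2 * (Sv x * Dv x)) 1 volume
        = ‖(2:ℝ)‖₊ * eLpNorm (fun x => Sv x * Dv x) 1 volume := by
      have := eLpNorm_const_smul (2:ℝ) (fun x => Sv x * Dv x) 1 (volume : Measure ℝ)
      simpa [Pi.smul_def, smul_eq_mul, enorm_eq_nnnorm] using this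
    rw [e, htwo]
    gcongr 2 * ?_
    have h := eLpNorm_smul_le_mul_eLpNorm (p := 2) (q := 2) (r := 1) mD_v mS_v
    have h' : eLpNorm (fun x => Sv x * Dv x) 1 volume ≤
        eLpNorm Sv 2 volume * eLpNorm Dv 2 volume := by
      exact h
    refine h'.trans ?_
    rw [hEvD]
    exact mul_le_mul_left hSv2 _
  have step3r : eLpNorm (fun x => 2 * (Sr x * Dr x)) 1 volume ≤
      2 * ((Nr₁ + Nr₂) * Er) := by
    have e : eLpNorm (fun x => 2 * (Sr x * Dr x)) 1 volume
        = ‖(2:ℝ)‖₊ * eLpNorm (fun x => Sr x * Dr x) 1 volume := by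
      have := eLpNorm_const_smul (2:ℝ) (fun x => Sr x * Dr x) 1 (volume : Measure ℝ)
      simpa [Pi.smul_def, smul_eq_mul, enorm_eq_nnnorm] using this
    rw [e, htwo]
    gcongr 2 * ?_
    have h := eLpNorm_smul_le_mul_eLpNorm (p := 2) (q := 2) (r := 1) mD_r mS_r
    have h' : eLpNorm (fun x => Sr x * Dr x) 1 volume ≤
        eLpNorm Sr 2 volume * eLpNorm Dr 2 volume := by
      exact h
    refine h'.trans ?_
    rw [hErD]
    exact mul_le_mul_left hSr2 _
  -- finiteness and conversion to reals
  have hNv₁ : Nv₁ ≤ ENNReal.ofReal M := by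
    have h := ENNReal.ofReal_le_ofReal hMv₁
    rwa [ENNReal.ofReal_toReal hv₁.2.ne] at h
  have hNv₂ : Nv₂ ≤ ENNReal.ofReal M := by
    have h := ENNReal.ofReal_le_ofReal hMv₂
    rwa [ENNReal.ofReal_toReal hv₂.2.ne] at h
  have hNr₁ : Nr₁ ≤ ENNReal.ofReal M := by
    have h := ENNReal.ofReal_le_ofReal hMρ₁
    rwa [ENNReal.ofReal_toReal hρ₁.2.ne] at h
  have hNr₂ : Nr₂ ≤ ENNReal.ofReal M := by
    have h := ENNReal.ofReal_le_ofReal hMρ₂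
    rwa [ENNReal.ofReal_toReal hρ₂.2.ne] at h
  have hEvfin : Ev ≠ ⊤ := (hv₁.sub hv₂).2.ne
  have hErfin : Er ≠ ⊤ := (hρ₁.sub hρ₂).2.ne
  have hEvr : Ev = ENNReal.ofReal Ev.toReal := (ENNReal.ofReal_toReal hEvfin).symm
  have hErr : Er = ENNReal.ofReal Er.toReal := (ENNReal.ofReal_toReal hErfin).symm
  calc eLpNorm (fun x => G₁ x - G₂ x) 1 volume
      ≤ 2 * ((Nv₁ + Nv₂) * Ev) + 2 * ((Nr₁ + Nr₂) * Er) :=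
        step1.trans (step2.trans (add_le_add step3v step3r))
    _ ≤ 2 * ((ENNReal.ofReal M + ENNReal.ofReal M) * ENNReal.ofReal Ev.toReal)
        + 2 * ((ENNReal.ofReal M + ENNReal.ofReal M) * ENNReal.ofReal Er.toReal) := by
        rw [← hEvr, ← hErr]
        gcongr
    _ = ENNReal.ofReal (4 * M * Ev.toReal) + ENNReal.ofReal (4 * M * Er.toReal) := by
        rw [← ENNReal.ofReal_add (by positivity) (by positivity)]
        rw [← ENNReal.ofReal_ofNat 2, ← ENNReal.ofReal_add (by positivity) (by positivity)]
        rw [← ENNReal.ofReal_mul (by positivity), ← ENNReal.ofReal_mul (by positivity),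
          ← ENNReal.ofReal_mul (by positivity), ← ENNReal.ofReal_mul (by positivity),
          ← ENNReal.ofReal_add (by positivity) (by positivity)]
        ring_nf
    _ = ENNReal.ofReal (4 * M * (Ev.toReal + Er.toReal)) := by
        rw [← ENNReal.ofReal_add (by positivity) (by positivity)]
        ring_nf
    _ = ENNReal.ofReal (4 * M * ((eLpNorm (fun x => v₁ x - v₂ x) 2 volume).toReal
        + (eLpNorm (fun x => ρ₁ x - ρ₂ x) 2 volume).toReal)) := rfl
end

section
/- Let v_n → v in L²(ℝ), ρ̄_n → ρ̄ in L²(ℝ) and k_n → k in ℝ, set ρ_n = ρ̄_n + k_n and ρ = ρ̄ + k, and suppose that for every n the set {x : ρ(x) = 0 and ρ_n(x) ≠ 0} ∪ {x : ρ(x) ≠ 0 and ρ_n(x) = 0} has Lebesgue measure zero. Define G_n and G pointwise by G_n(x) = |v_n(x)| + 2|k_n ρ̄_n(x)| + 2 when |v_n(x)| + 2|k_n ρ̄_n(x)| + 2 ≤ 1 + v_n(x)² + ρ̄_n(x)², v_n(x) ≤ 0 and ρ_n(x) = 0 simultaneously hold, and G_n(x) = 1 + v_n(x)² + ρ̄_n(x)²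 otherwise (and analogously G from v, ρ̄, k). Then G_n − 1 converges to G − 1 in L¹(ℝ). -/
open MeasureTheory Filter

open scoped ENNReal

section Aux

/-- Generalized dominated convergence (ENNReal, limit 0). -/
lemma aux_glDCT0 {α : Type*} [MeasurableSpace α] {μ : Measure α}
    {F g : ℕ → α → ℝ≥0∞} {B : α → ℝ≥0∞}
    (hF : ∀ n, AEMeasurable (F n) μ) (hg : ∀ n, AEMeasurable (g n) μ)
    (hB : AEMeasurable B μ)
    (hle : ∀ n, ∀ x, F n x ≤ g n x)
    (hFlim : ∀ᵐ x ∂μ, Tendsto (fun n => F n x) atTop (nhds 0))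
    (hglim : ∀ᵐ x ∂μ, Tendsto (fun n => g n x) atTop (nhds (B x)))
    (hBfin : ∫⁻ x, B x ∂μ ≠ ⊤)
    (hgint : Tendsto (fun n => ∫⁻ x, g n x ∂μ) atTop (nhds (∫⁻ x, B x ∂μ))) :
    Tendsto (fun n => ∫⁻ x, F n x ∂μ) atTop (nhds 0) := by
  set I := ∫⁻ x, B x ∂μ with hI
  have hdm : ∀ n, AEMeasurable (fun x => g n x - F n x) μ := fun n => (hg n).sub (hF n)
  have hdlim : ∀ᵐ x ∂μ, Tendsto (fun n => g n x - F n x) atTop (nhds (B x)) := by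
    filter_upwards [hFlim, hglim, ae_lt_top' hB hBfin] with x h1 h2 h3
    simpa using ENNReal.Tendsto.sub h2 h1 (Or.inl h3.ne)
  have hFatou : I ≤ liminf (fun n => ∫⁻ x, (g n x - F n x) ∂μ) atTop := by
    calc I = ∫⁻ x, liminf (fun n => g n x - F n x) atTop ∂μ :=
          (lintegral_congr_ae (hdlim.mono fun x h => h.liminf_eq)).symm
      _ ≤ _ := lintegral_liminf_le' hdm
  have hsum : ∀ n, (∫⁻ x, (g n x - F n x) ∂μ) + ∫⁻ x, F n x ∂μ = ∫⁻ x, g n x ∂μ := by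
    intro n
    rw [← lintegral_add_left' (hdm n)]
    exact lintegral_congr fun x => tsub_add_cancel_of_le (hle n x)
  rw [ENNReal.tendsto_nhds_zero]
  intro ε hε
  rcases eq_or_ne ε ⊤ with rfl | hεt
  · exact Eventually.of_forall fun n => le_top
  have hε2 : ε / 2 ≠ 0 := by
    simp [ENNReal.div_eq_zero_iff, hε.ne']
  have h1 : ∀ᶠ n in atTop, ∫⁻ x, g n x ∂μ < I + ε / 2 :=
    Tendsto.eventually_lt_const (ENNReal.lt_add_right hBfin hε2) hgint
  by_cases hIe : I ≤ ε / 2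
  · filter_upwards [h1] with n hn
    calc ∫⁻ x, F n x ∂μ ≤ ∫⁻ x, g n x ∂μ := lintegral_mono (hle n)
      _ ≤ I + ε / 2 := hn.le
      _ ≤ ε / 2 + ε / 2 := by exact add_le_add hIe le_rfl
      _ = ε := ENNReal.add_halves ε
  · push_neg at hIe
    have h2 : ∀ᶠ n in atTop, I - ε / 2 < ∫⁻ x, (g n x - F n x) ∂μ :=
      eventually_lt_of_lt_liminf
        ((ENNReal.sub_lt_self hBfin (by
          intro h; rw [h] at hIe; exact absurd hIe (not_lt.2 (zero_le))) hε2).trans_le hFatou)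
    filter_upwards [h1, h2] with n hn1 hn2
    have hdfin : (∫⁻ x, (g n x - F n x) ∂μ) ≠ ⊤ := by
      refine ne_of_lt (lt_of_le_of_lt (lintegral_mono fun x => tsub_le_self) ?_)
      exact hn1.trans_le le_top
    have hFeq : ∫⁻ x, F n x ∂μ = (∫⁻ x, g n x ∂μ) - ∫⁻ x, (g n x - F n x) ∂μ :=
      ENNReal.eq_sub_of_add_eq hdfin (by rw [add_comm]; exact hsum n)
    rw [hFeq]
    calc (∫⁻ x, g n x ∂μ) - ∫⁻ x, (g n x - F n x) ∂μ
        ≤ (I + ε / 2) - (I - ε / 2) := tsub_le_tsub hn1.le hn2.le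
      _ ≤ ε := by
          have h3 : (I - ε / 2) + ε = I + ε / 2 := by
            nth_rw 2 [show ε = ε / 2 + ε / 2 from (ENNReal.add_halves ε).symm]
            rw [← add_assoc, tsub_add_cancel_of_le hIe.le]
          rw [← h3, ENNReal.add_sub_cancel_left (ne_top_of_le_ne_top hBfin tsub_le_self)]

lemma aux_lintegral_sq (f : ℝ → ℝ) (μ : Measure ℝ) :
    ∫⁻ x, ENNReal.ofReal (f x ^ 2) ∂μ = (eLpNorm f 2 μ) ^ 2 := by
  rw [eLpNorm_eq_lintegral_rpow_enorm_toReal (by norm_num) (by norm_num)]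
  have h2 : ((2 : ℝ≥0∞)).toReal = (2 : ℝ) := by norm_num
  rw [h2, ← ENNReal.rpow_natCast _ 2, ← ENNReal.rpow_mul]
  norm_num
  refine lintegral_congr fun x => ?_
  rw [Real.enorm_eq_ofReal_abs, ← sq_abs (f x), ENNReal.ofReal_pow (abs_nonneg _)]

lemma aux_sq_tendsto {f : ℕ → ℝ → ℝ} {f₀ : ℝ → ℝ}
    (hf : ∀ n, AEStronglyMeasurable (f n) volume) (hf₀ : MemLp f₀ 2 volume)
    (hconv : Tendsto (fun n => eLpNorm (fun x => f n x - f₀ x) 2 volume) atTop (nhds 0)) :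
    Tendsto (fun n => ∫⁻ x, ENNReal.ofReal (f n x ^ 2)) atTop
      (nhds (∫⁻ x, ENNReal.ofReal (f₀ x ^ 2))) := by
  have key : Tendsto (fun n => eLpNorm (f n) 2 volume) atTop (nhds (eLpNorm f₀ 2 volume)) := by
    have hub : ∀ n, eLpNorm (f n) 2 volume
        ≤ eLpNorm f₀ 2 volume + eLpNorm (fun x => f n x - f₀ x) 2 volume := by
      intro n
      have : f n = f₀ + (fun x => f n x - f₀ x) := by funext x; simp
      nth_rw 1 [this]
      exact eLpNorm_add_le hf₀.1 ((hf n).sub hf₀.1) (by norm_num)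
    have hlb : ∀ n, eLpNorm f₀ 2 volume - eLpNorm (fun x => f n x - f₀ x) 2 volume
        ≤ eLpNorm (f n) 2 volume := by
      intro n
      rw [tsub_le_iff_right]
      have : f₀ = f n - (fun x => f n x - f₀ x) := by funext x; simp
      nth_rw 1 [this]
      exact eLpNorm_sub_le (hf n) ((hf n).sub hf₀.1) (by norm_num)
    refine tendsto_of_tendsto_of_tendsto_of_le_of_le ?_ ?_ hlb hub
    · simpa using ENNReal.Tendsto.sub (tendsto_const_nhds (x := eLpNorm f₀ 2 volume)) hconv
        (Or.inl hf₀.eLpNorm_ne_top)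
    · simpa using Tendsto.add (tendsto_const_nhds (x := eLpNorm f₀ 2 volume)) hconv
  have := ((ENNReal.continuous_pow 2).continuousAt.tendsto).comp key
  simp only [Function.comp_def] at this
  simpa only [aux_lintegral_sq] using this

lemma aux_pointwise (a b kk : ℕ → ℝ) (a₀ b₀ k₀ : ℝ)
    (ha : Tendsto a atTop (nhds a₀)) (hb : Tendsto b atTop (nhds b₀))
    (hk : Tendsto kk atTop (nhds k₀))
    (hz : ∀ n, (b₀ + k₀ = 0 ↔ b n + kk n = 0)) :
    Tendsto (fun n =>
        if |a n| + 2 * |kk n * b n| + 2 ≤ 1 + (a n) ^ 2 + (b n) ^ 2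
            ∧ a n ≤ 0 ∧ b n + kk n = 0
        then |a n| + 2 * |kk n * b n| + 2 else 1 + (a n) ^ 2 + (b n) ^ 2) atTop
      (nhds (if |a₀| + 2 * |k₀ * b₀| + 2 ≤ 1 + a₀ ^ 2 + b₀ ^ 2 ∧ a₀ ≤ 0 ∧ b₀ + k₀ = 0
        then |a₀| + 2 * |k₀ * b₀| + 2 else 1 + a₀ ^ 2 + b₀ ^ 2)) := by
  have hB1 : Tendsto (fun n => |a n| + 2 * |kk n * b n| + 2) atTop
      (nhds (|a₀| + 2 * |k₀ * b₀| + 2)) :=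
    ((ha.abs.add (((hk.mul hb).abs).const_mul 2)).add tendsto_const_nhds)
  have hB2 : Tendsto (fun n => 1 + (a n) ^ 2 + (b n) ^ 2) atTop
      (nhds (1 + a₀ ^ 2 + b₀ ^ 2)) :=
    ((tendsto_const_nhds.add (ha.pow 2)).add (hb.pow 2))
  by_cases hzc : b₀ + k₀ = 0
  · have hbn : ∀ n, b n + kk n = 0 := fun n => (hz n).1 hzc
    rcases lt_trichotomy (|a₀| + 2 * |k₀ * b₀| + 2) (1 + a₀ ^ 2 + b₀ ^ 2) with hlt | heq | hgt
    · rcases lt_trichotomy a₀ 0 with ha0 | ha0 | ha0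
      · -- condition eventually true
        rw [if_pos ⟨hlt.le, ha0.le, hzc⟩]
        refine Tendsto.congr' ?_ hB1
        filter_upwards [hB1.eventually_lt hB2 hlt, Tendsto.eventually_lt_const ha0 ha] with n h1 h2
        rw [if_pos ⟨h1.le, h2.le, hbn n⟩]
      · -- a₀ = 0 : contradiction
        exfalso
        have hk₀ : k₀ = -b₀ := by linarith
        rw [ha0, hk₀] at hlt
        have habs : |(-b₀) * b₀| = b₀ ^ 2 := by
          rw [abs_mul, abs_neg, ← abs_mul, ← sq, abs_of_nonneg (sq_nonneg b₀)]
        rw [habs] at hlt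
        simp only [abs_zero] at hlt
        nlinarith [sq_nonneg b₀]
      · -- a₀ > 0 : condition eventually false
        rw [if_neg (fun h => absurd h.2.1 (not_le.2 ha0))]
        refine Tendsto.congr' ?_ hB2
        filter_upwards [Tendsto.eventually_const_lt ha0 ha] with n h2
        rw [if_neg (fun h => absurd h.2.1 (not_le.2 h2))]
    · -- boundary: squeeze
      have htgt : (if |a₀| + 2 * |k₀ * b₀| + 2 ≤ 1 + a₀ ^ 2 + b₀ ^ 2 ∧ a₀ ≤ 0 ∧ b₀ + k₀ = 0
          then |a₀| + 2 * |k₀ * b₀| + 2 else 1 + a₀ ^ 2 + b₀ ^ 2) = 1 + a₀ ^ 2 + b₀ ^ 2 := by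
        split_ifs with h
        · exact heq
        · rfl
      rw [htgt]
      have hmin : Tendsto (fun n => min (|a n| + 2 * |kk n * b n| + 2) (1 + (a n) ^ 2 + (b n) ^ 2))
          atTop (nhds (1 + a₀ ^ 2 + b₀ ^ 2)) := by
        have := hB1.min hB2
        rwa [heq, min_self] at this
      have hmax : Tendsto (fun n => max (|a n| + 2 * |kk n * b n| + 2) (1 + (a n) ^ 2 + (b n) ^ 2))
          atTop (nhds (1 + a₀ ^ 2 + b₀ ^ 2)) := by
        have := hB1.max hB2
        rwa [heq, max_self] at this
      refine tendsto_of_tendsto_of_tendsto_of_le_of_le hmin hmax ?_ ?_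
      · intro n; dsimp only; split_ifs
        · exact min_le_left _ _
        · exact min_le_right _ _
      · intro n; dsimp only; split_ifs
        · exact le_max_left _ _
        · exact le_max_right _ _
    · -- b1 > b2 : condition eventually false
      rw [if_neg (fun h => absurd h.1 (not_le.2 hgt))]
      refine Tendsto.congr' ?_ hB2
      filter_upwards [hB2.eventually_lt hB1 hgt] with n h1
      rw [if_neg (fun h => absurd h.1 (not_le.2 h1))]
  · have hbn : ∀ n, b n + kk n ≠ 0 := fun n h => hzc ((hz n).2 h)
    rw [if_neg (fun h => hzc h.2.2)]
    refine Tendsto.congr (fun n => ?_) hB2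
    rw [if_neg (fun h => hbn n h.2.2)]

lemma aux_aesm {v ρ : ℝ → ℝ} {kc : ℝ}
    (hv : AEMeasurable v (volume : Measure ℝ)) (hρ : AEMeasurable ρ volume)
    (Gf : ℝ → ℝ)
    (hGf : ∀ x, Gf x = if |v x| + 2 * |kc * ρ x| + 2 ≤ 1 + (v x) ^ 2 + (ρ x) ^ 2
        ∧ v x ≤ 0 ∧ ρ x + kc = 0
      then |v x| + 2 * |kc * ρ x| + 2 else 1 + (v x) ^ 2 + (ρ x) ^ 2) :
    AEStronglyMeasurable Gf volume := by
  classical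
  set H : ℝ × ℝ → ℝ := fun p =>
    if |p.1| + 2 * |kc * p.2| + 2 ≤ 1 + p.1 ^ 2 + p.2 ^ 2 ∧ p.1 ≤ 0 ∧ p.2 + kc = 0
    then |p.1| + 2 * |kc * p.2| + 2 else 1 + p.1 ^ 2 + p.2 ^ 2 with hH
  have hset : MeasurableSet {p : ℝ × ℝ |
      |p.1| + 2 * |kc * p.2| + 2 ≤ 1 + p.1 ^ 2 + p.2 ^ 2 ∧ p.1 ≤ 0 ∧ p.2 + kc = 0} := by
    simp only [Set.setOf_and]
    refine MeasurableSet.inter ?_ (MeasurableSet.inter ?_ ?_)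
    · exact measurableSet_le (by fun_prop) (by fun_prop)
    · exact measurableSet_le (by fun_prop) measurable_const
    · exact (measurable_snd.add_const kc) (measurableSet_singleton 0)
  have hmH : Measurable H := Measurable.ite hset (by fun_prop) (by fun_prop)
  have : Gf = fun x => H (v x, ρ x) := by
    funext x; rw [hGf x]
  rw [this]
  exact (hmH.comp_aemeasurable (hv.prodMk hρ)).aestronglyMeasurable

lemma aux_bounds {v ρ : ℝ → ℝ} {kc : ℝ} (Gf : ℝ → ℝ)
    (hGf : ∀ x, Gf x = if |v x| + 2 * |kc * ρ x| + 2 ≤ 1 + (v x) ^ 2 + (ρ x) ^ 2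
        ∧ v x ≤ 0 ∧ ρ x + kc = 0
      then |v x| + 2 * |kc * ρ x| + 2 else 1 + (v x) ^ 2 + (ρ x) ^ 2)
    (x : ℝ) : 1 ≤ Gf x ∧ Gf x ≤ 1 + (v x) ^ 2 + (ρ x) ^ 2 := by
  rw [hGf x]
  split_ifs with h
  · constructor
    · have := abs_nonneg (v x); have := abs_nonneg (kc * ρ x); linarith
    · linarith [h.1]
  · constructor
    · nlinarith [sq_nonneg (v x), sq_nonneg (ρ x)]
    · exact le_refl _

end Aux

open Classical in
/-- If `vₙ → v` in `L²`, `ρ̄ₙ → ρ̄` in `L²`, `kₙ → k` in `ℝ`, and for each `n` the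
zero sets of `ρₙ = ρ̄ₙ + kₙ` and `ρ = ρ̄ + k` agree up to a null set, then
`Gₙ - 1 → G - 1` in `L¹(ℝ)`. -/
theorem eulerian_g_L1_convergence
    (v : ℕ → ℝ → ℝ) (v₀ : ℝ → ℝ) (ρ : ℕ → ℝ → ℝ) (ρ₀ : ℝ → ℝ)
    (k : ℕ → ℝ) (k₀ : ℝ)
    (hvn : ∀ n, MemLp (v n) 2 volume) (hv₀ : MemLp v₀ 2 volume)
    (hρn : ∀ n, MemLp (ρ n) 2 volume) (hρ₀ : MemLp ρ₀ 2 volume)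
    (hvconv : Tendsto (fun n => eLpNorm (fun x => v n x - v₀ x) 2 volume) atTop (nhds 0))
    (hρconv : Tendsto (fun n => eLpNorm (fun x => ρ n x - ρ₀ x) 2 volume) atTop (nhds 0))
    (hkconv : Tendsto k atTop (nhds k₀))
    (hzero : ∀ n, volume ({x | ρ₀ x + k₀ = 0 ∧ ρ n x + k n ≠ 0}
        ∪ {x | ρ₀ x + k₀ ≠ 0 ∧ ρ n x + k n = 0}) = 0)
    (G : ℕ → ℝ → ℝ) (G₀ : ℝ → ℝ)
    (hG : ∀ n, ∀ x : ℝ,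
      G n x = if |v n x| + 2 * |k n * ρ n x| + 2 ≤ 1 + (v n x) ^ 2 + (ρ n x) ^ 2
                ∧ v n x ≤ 0 ∧ ρ n x + k n = 0
              then |v n x| + 2 * |k n * ρ n x| + 2
              else 1 + (v n x) ^ 2 + (ρ n x) ^ 2)
    (hG₀ : ∀ x : ℝ,
      G₀ x = if |v₀ x| + 2 * |k₀ * ρ₀ x| + 2 ≤ 1 + (v₀ x) ^ 2 + (ρ₀ x) ^ 2
                ∧ v₀ x ≤ 0 ∧ ρ₀ x + k₀ = 0
              then |v₀ x| + 2 * |k₀ * ρ₀ x| + 2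
              else 1 + (v₀ x) ^ 2 + (ρ₀ x) ^ 2) :
    Tendsto (fun n => eLpNorm (fun x => (G n x - 1) - (G₀ x - 1)) 1 volume)
      atTop (nhds 0) := by
  simp only [sub_sub_sub_cancel_right, eLpNorm_one_eq_lintegral_enorm]
  -- measurability of G n and G₀
  have hGsm : ∀ n, AEStronglyMeasurable (G n) volume := fun n =>
    aux_aesm (hvn n).1.aemeasurable (hρn n).1.aemeasurable _ (hG n)
  have hG₀sm : AEStronglyMeasurable G₀ volume :=
    aux_aesm hv₀.1.aemeasurable hρ₀.1.aemeasurable _ hG₀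
  -- a.e. agreement of zero sets
  have hzae : ∀ᵐ x ∂(volume : Measure ℝ), ∀ n, (ρ₀ x + k₀ = 0 ↔ ρ n x + k n = 0) := by
    rw [ae_all_iff]
    intro n
    filter_upwards [measure_eq_zero_iff_ae_notMem.mp (hzero n)] with x hx
    simp only [Set.mem_union, Set.mem_setOf_eq] at hx
    push_neg at hx
    exact ⟨hx.1, not_imp_not.mp hx.2⟩
  refine tendsto_of_subseq_tendsto fun ns hns => ?_
  -- extract a.e. convergent sub-subsequence for v
  have hv1 : TendstoInMeasure volume (fun i => v (ns i)) atTop v₀ := by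
    refine tendstoInMeasure_of_tendsto_eLpNorm (p := 2) (by norm_num)
      (fun i => (hvn (ns i)).1) hv₀.1 ?_
    have := hvconv.comp hns
    simpa [Function.comp_def, Pi.sub_def] using this
  obtain ⟨ms1, hms1mono, hms1ae⟩ := hv1.exists_seq_tendsto_ae
  -- extract a.e. convergent sub-sub-subsequence for ρ
  have hρ1 : TendstoInMeasure volume (fun i => ρ (ns (ms1 i))) atTop ρ₀ := by
    refine tendstoInMeasure_of_tendsto_eLpNorm (p := 2) (by norm_num)
      (fun i => (hρn (ns (ms1 i))).1) hρ₀.1 ?_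
    have := hρconv.comp (hns.comp hms1mono.tendsto_atTop)
    simpa [Function.comp_def, Pi.sub_def] using this
  obtain ⟨ms2, hms2mono, hρae⟩ := hρ1.exists_seq_tendsto_ae
  refine ⟨ms1 ∘ ms2, ?_⟩
  have hφ : Tendsto (fun i => ns (ms1 (ms2 i))) atTop atTop :=
    hns.comp (hms1mono.tendsto_atTop.comp hms2mono.tendsto_atTop)
  have hvae : ∀ᵐ x ∂(volume : Measure ℝ),
      Tendsto (fun i => v (ns (ms1 (ms2 i))) x) atTop (nhds (v₀ x)) :=
    hms1ae.mono fun x h => h.comp hms2mono.tendsto_atTop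
  show Tendsto (fun i => ∫⁻ x, (‖G (ns (ms1 (ms2 i))) x - G₀ x‖ₑ : ENNReal))
    atTop (nhds 0)
  set φ : ℕ → ℕ := fun i => ns (ms1 (ms2 i)) with hφdef
  -- measurable building blocks
  have hof : ∀ (f : ℝ → ℝ), AEStronglyMeasurable f volume →
      AEMeasurable (fun x => ENNReal.ofReal (f x ^ 2)) volume := fun f hf =>
    ENNReal.measurable_ofReal.comp_aemeasurable (hf.aemeasurable.pow_const 2)
  -- apply generalized dominated convergence
  refine aux_glDCT0 (μ := volume)
    (g := fun i x => (ENNReal.ofReal ((v (φ i) x) ^ 2) + ENNReal.ofReal ((ρ (φ i) x) ^ 2))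
      + (ENNReal.ofReal ((v₀ x) ^ 2) + ENNReal.ofReal ((ρ₀ x) ^ 2)))
    (B := fun x => (ENNReal.ofReal ((v₀ x) ^ 2) + ENNReal.ofReal ((ρ₀ x) ^ 2))
      + (ENNReal.ofReal ((v₀ x) ^ 2) + ENNReal.ofReal ((ρ₀ x) ^ 2)))
    (fun i => ((hGsm (φ i)).sub hG₀sm).enorm)
    (fun i => (((hof _ (hvn (φ i)).1).add (hof _ (hρn (φ i)).1)).add
      ((hof _ hv₀.1).add (hof _ hρ₀.1))))
    (((hof _ hv₀.1).add (hof _ hρ₀.1)).add ((hof _ hv₀.1).add (hof _ hρ₀.1)))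
    ?_ ?_ ?_ ?_ ?_
  · -- pointwise domination
    intro i x
    obtain ⟨l1, u1⟩ := aux_bounds (G (φ i)) (hG (φ i)) x
    obtain ⟨l0, u0⟩ := aux_bounds G₀ hG₀ x
    have hreal : |G (φ i) x - G₀ x|
        ≤ ((v (φ i) x) ^ 2 + (ρ (φ i) x) ^ 2) + ((v₀ x) ^ 2 + (ρ₀ x) ^ 2) := by
      rw [abs_le]; constructor <;> linarith
    calc (‖G (φ i) x - G₀ x‖ₑ : ENNReal)
        = ENNReal.ofReal |G (φ i) x - G₀ x| := Real.enorm_eq_ofReal_abs _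
      _ ≤ ENNReal.ofReal (((v (φ i) x) ^ 2 + (ρ (φ i) x) ^ 2)
            + ((v₀ x) ^ 2 + (ρ₀ x) ^ 2)) := ENNReal.ofReal_le_ofReal hreal
      _ ≤ ENNReal.ofReal ((v (φ i) x) ^ 2 + (ρ (φ i) x) ^ 2)
            + ENNReal.ofReal ((v₀ x) ^ 2 + (ρ₀ x) ^ 2) := ENNReal.ofReal_add_le
      _ ≤ _ := add_le_add ENNReal.ofReal_add_le ENNReal.ofReal_add_le
  · -- pointwise convergence to 0
    filter_upwards [hvae, hρae, hzae] with x hvx hρx hzx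
    have hT := aux_pointwise (fun i => v (φ i) x) (fun i => ρ (φ i) x) (fun i => k (φ i))
      (v₀ x) (ρ₀ x) k₀ hvx hρx (hkconv.comp hφ) (fun i => hzx (φ i))
    have hGx : Tendsto (fun i => G (φ i) x) atTop (nhds (G₀ x)) := by
      rw [hG₀ x]
      exact Tendsto.congr (fun i => (hG (φ i) x).symm) hT
    have h1 : Tendsto (fun i => G (φ i) x - G₀ x) atTop (nhds 0) := by
      simpa using hGx.sub (tendsto_const_nhds (x := G₀ x))
    have h2 := ENNReal.tendsto_ofReal h1.abs
    simp only [Real.enorm_eq_ofReal_abs]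
    simpa using h2
  · -- convergence of the dominating sequence
    filter_upwards [hvae, hρae] with x hvx hρx
    exact Tendsto.add
      ((ENNReal.tendsto_ofReal (hvx.pow 2)).add (ENNReal.tendsto_ofReal (hρx.pow 2)))
      tendsto_const_nhds
  · -- finiteness of the limit dominator
    have hsplit : ∫⁻ x, ((ENNReal.ofReal ((v₀ x) ^ 2) + ENNReal.ofReal ((ρ₀ x) ^ 2))
        + (ENNReal.ofReal ((v₀ x) ^ 2) + ENNReal.ofReal ((ρ₀ x) ^ 2)))
        = ((eLpNorm v₀ 2 volume) ^ 2 + (eLpNorm ρ₀ 2 volume) ^ 2)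
          + ((eLpNorm v₀ 2 volume) ^ 2 + (eLpNorm ρ₀ 2 volume) ^ 2) := by
      rw [lintegral_add_left' (f := fun x => ENNReal.ofReal ((v₀ x) ^ 2) + ENNReal.ofReal ((ρ₀ x) ^ 2)) ((hof _ hv₀.1).add (hof _ hρ₀.1)),
        lintegral_add_left' (hof _ hv₀.1), aux_lintegral_sq, aux_lintegral_sq]
    rw [hsplit]
    have h1 : (eLpNorm v₀ 2 volume) ^ 2 ≠ ⊤ := ENNReal.pow_ne_top hv₀.eLpNorm_ne_top
    have h2 : (eLpNorm ρ₀ 2 volume) ^ 2 ≠ ⊤ := ENNReal.pow_ne_top hρ₀.eLpNorm_ne_top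
    simp [ENNReal.add_ne_top, h1, h2]
  · -- convergence of integrals of dominators
    have hsplit : ∀ i, ∫⁻ x, ((ENNReal.ofReal ((v (φ i) x) ^ 2)
          + ENNReal.ofReal ((ρ (φ i) x) ^ 2))
        + (ENNReal.ofReal ((v₀ x) ^ 2) + ENNReal.ofReal ((ρ₀ x) ^ 2)))
        = ((∫⁻ x, ENNReal.ofReal ((v (φ i) x) ^ 2))
            + (∫⁻ x, ENNReal.ofReal ((ρ (φ i) x) ^ 2)))
          + ((∫⁻ x, ENNReal.ofReal ((v₀ x) ^ 2)) + (∫⁻ x, ENNReal.ofReal ((ρ₀ x) ^ 2))) := by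
      intro i
      rw [lintegral_add_left' (f := fun x => ENNReal.ofReal ((v (φ i) x) ^ 2) + ENNReal.ofReal ((ρ (φ i) x) ^ 2)) ((hof _ (hvn (φ i)).1).add (hof _ (hρn (φ i)).1)),
        lintegral_add_left' (hof _ (hvn (φ i)).1),
        lintegral_add_left' (hof _ hv₀.1)]
    have hsplitB : ∫⁻ x, ((ENNReal.ofReal ((v₀ x) ^ 2) + ENNReal.ofReal ((ρ₀ x) ^ 2))
        + (ENNReal.ofReal ((v₀ x) ^ 2) + ENNReal.ofReal ((ρ₀ x) ^ 2)))
        = ((∫⁻ x, ENNReal.ofReal ((v₀ x) ^ 2)) + (∫⁻ x, ENNReal.ofReal ((ρ₀ x) ^ 2)))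
          + ((∫⁻ x, ENNReal.ofReal ((v₀ x) ^ 2)) + (∫⁻ x, ENNReal.ofReal ((ρ₀ x) ^ 2))) := by
      rw [lintegral_add_left' (f := fun x => ENNReal.ofReal ((v₀ x) ^ 2) + ENNReal.ofReal ((ρ₀ x) ^ 2)) ((hof _ hv₀.1).add (hof _ hρ₀.1)),
        lintegral_add_left' (hof _ hv₀.1)]
    simp only [hsplit, hsplitB]
    have hvT : Tendsto (fun i => ∫⁻ x, ENNReal.ofReal ((v (φ i) x) ^ 2)) atTop
        (nhds (∫⁻ x, ENNReal.ofReal ((v₀ x) ^ 2))) := by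
      refine aux_sq_tendsto (fun i => (hvn (φ i)).1) hv₀ ?_
      have := hvconv.comp hφ
      simpa [Function.comp_def] using this
    have hρT : Tendsto (fun i => ∫⁻ x, ENNReal.ofReal ((ρ (φ i) x) ^ 2)) atTop
        (nhds (∫⁻ x, ENNReal.ofReal ((ρ₀ x) ^ 2))) := by
      refine aux_sq_tendsto (fun i => (hρn (φ i)).1) hρ₀ ?_
      have := hρconv.comp hφ
      simpa [Function.comp_def] using this
    exact (hvT.add hρT).add tendsto_const_nhds
end

section
/- Let y and y_n (n ∈ ℕ) be nondecreasing 1-Lipschitz functions from ℝ to ℝ such that y − id is bounded and y_n → y uniformly on ℝ, and let g, g_n ∈ L¹(ℝ) with ‖g_n − g‖_{L¹} → 0. Then ∫_ℝ |g_n(y_n(ξ)) − g(y(ξ))| · y_n'(ξ) · y'(ξ) dξ → 0 as n → ∞, where y' and y_n' denote the almost-everywhere defined derivatives (which lie in [0,1]). -/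
open MeasureTheory Filter

open Set Topology

namespace CDL1

lemma deriv_nonneg_of_monotone {y : ℝ → ℝ} (hy : Monotone y) (ξ : ℝ) : 0 ≤ deriv y ξ := by
  by_cases hd : DifferentiableAt ℝ y ξ
  · have hslope : Tendsto (slope y ξ) (𝓝[>] ξ) (𝓝 (deriv y ξ)) :=
      (hasDerivAt_iff_tendsto_slope.1 hd.hasDerivAt).mono_left
        (nhdsWithin_mono ξ fun t ht => ne_of_gt ht)
    refine le_of_tendsto_of_tendsto tendsto_const_nhds hslope ?_
    filter_upwards [self_mem_nhdsWithin] with t ht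
    have ht' : ξ < t := ht
    have : y ξ ≤ y t := hy ht'.le
    simp only [slope_def_field]
    exact div_nonneg (by linarith) (by linarith)
  · simp [deriv_zero_of_not_differentiableAt hd]

lemma deriv_le_one_of_lipschitz {y : ℝ → ℝ} (hyL : LipschitzWith 1 y) (ξ : ℝ) :
    deriv y ξ ≤ 1 := by
  by_cases hd : DifferentiableAt ℝ y ξ
  · have := hd.hasDerivAt.le_of_lipschitz hyL
    rw [Real.norm_eq_abs] at this
    have h1 : |deriv y ξ| ≤ 1 := by simpa using this
    exact (abs_le.1 h1).2
  · simp [deriv_zero_of_not_differentiableAt hd]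

lemma deriv_eq_zero_of_const {y : ℝ → ℝ} (hy : Monotone y) {a b : ℝ} (hab : a < b)
    (heq : y b = y a) : deriv y a = 0 := by
  by_cases hd : DifferentiableAt ℝ y a
  · have hslope : Tendsto (slope y a) (𝓝[>] a) (𝓝 (deriv y a)) :=
      (hasDerivAt_iff_tendsto_slope.1 hd.hasDerivAt).mono_left
        (nhdsWithin_mono a fun t ht => ne_of_gt ht)
    have h0 : Tendsto (slope y a) (𝓝[>] a) (𝓝 (0 : ℝ)) := by
      refine Tendsto.congr' ?_ tendsto_const_nhds
      filter_upwards [Ioo_mem_nhdsGT_of_mem ⟨le_refl a, hab⟩] with t ht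
      have h1 : y t ≤ y a := heq ▸ hy ht.2.le
      have h2 : y a ≤ y t := hy ht.1.le
      have : y t = y a := le_antisymm h1 h2
      simp [slope_def_field, this]
    exact tendsto_nhds_unique hslope h0
  · exact deriv_zero_of_not_differentiableAt hd

lemma injOn_of_deriv_ne_zero {y : ℝ → ℝ} (hy : Monotone y) {s : Set ℝ}
    (hs : ∀ ξ ∈ s, deriv y ξ ≠ 0) : InjOn y s := by
  intro a ha b hb hab
  by_contra hne
  rcases lt_or_gt_of_ne hne with h | h
  · exact hs a ha (deriv_eq_zero_of_const hy h hab.symm)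
  · exact hs b hb (deriv_eq_zero_of_const hy h hab)

lemma setLIntegral_comp_eq {y : ℝ → ℝ} (hy : Monotone y) {s : Set ℝ}
    (hsm : MeasurableSet s) (hss : ∀ ξ ∈ s, deriv y ξ ≠ 0) (f : ℝ → ENNReal) :
    ∫⁻ x in y '' s, f x = ∫⁻ ξ in s, f (y ξ) * ENNReal.ofReal (deriv y ξ) := by
  have hdiff : ∀ ξ ∈ s, HasDerivWithinAt y (deriv y ξ) s ξ := by
    intro ξ hξ
    by_cases hd : DifferentiableAt ℝ y ξ
    · exact hd.hasDerivAt.hasDerivWithinAt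
    · exact absurd (deriv_zero_of_not_differentiableAt hd) (hss ξ hξ)
  have hinj : InjOn y s := injOn_of_deriv_ne_zero hy hss
  have himg := lintegral_image_eq_lintegral_abs_det_fderiv_mul volume hsm
      (fun ξ hξ => (hdiff ξ hξ).hasFDerivWithinAt) hinj f
  rw [himg]
  refine setLIntegral_congr_fun hsm (fun ξ hξ => ?_)
  rw [ContinuousLinearMap.det_toSpanSingleton, abs_of_nonneg (deriv_nonneg_of_monotone hy ξ), mul_comm]

lemma lintegral_comp_le {y : ℝ → ℝ} (hy : Monotone y) (f : ℝ → ENNReal) :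
    ∫⁻ ξ, f (y ξ) * ENNReal.ofReal (deriv y ξ) ≤ ∫⁻ x, f x := by
  set s : Set ℝ := {ξ | deriv y ξ ≠ 0} with hs
  have hsm : MeasurableSet s := (measurable_deriv y (measurableSet_singleton (0:ℝ))).compl
  have hcompl : ∫⁻ ξ in sᶜ, f (y ξ) * ENNReal.ofReal (deriv y ξ) = 0 := by
    have : ∫⁻ ξ in sᶜ, f (y ξ) * ENNReal.ofReal (deriv y ξ) = ∫⁻ _ in sᶜ, (0:ENNReal) := by
      refine setLIntegral_congr_fun hsm.compl (fun ξ hξ => ?_)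
      have h0 : deriv y ξ = 0 := not_not.mp hξ
      simp [h0]
    simpa using this
  calc ∫⁻ ξ, f (y ξ) * ENNReal.ofReal (deriv y ξ)
      = (∫⁻ ξ in s, f (y ξ) * ENNReal.ofReal (deriv y ξ))
        + ∫⁻ ξ in sᶜ, f (y ξ) * ENNReal.ofReal (deriv y ξ) :=
        (lintegral_add_compl _ hsm).symm
    _ = ∫⁻ x in y '' s, f x := by
        rw [hcompl, add_zero, setLIntegral_comp_eq hy hsm (fun ξ hξ => hξ)]
    _ ≤ ∫⁻ x, f x := setLIntegral_le_lintegral _ _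

lemma null_preimage {y : ℝ → ℝ} (hy : Monotone y) (hyc : Continuous y) {N : Set ℝ}
    (hN : volume N = 0) : volume {ξ | y ξ ∈ N ∧ deriv y ξ ≠ 0} = 0 := by
  obtain ⟨N', hNN', hN'm, hN'0⟩ := exists_measurable_superset_of_null hN
  set s : Set ℝ := y ⁻¹' N' ∩ {ξ | deriv y ξ ≠ 0} with hsdef
  have hsm : MeasurableSet s :=
    (hN'm.preimage hyc.measurable).inter
      ((measurable_deriv y (measurableSet_singleton (0:ℝ))).compl)
  have himg : ∫⁻ ξ in s, (1:ENNReal) * ENNReal.ofReal (deriv y ξ) = volume (y '' s) := by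
    rw [← setLIntegral_comp_eq hy hsm (fun ξ hξ => hξ.2) (fun _ => 1), setLIntegral_one]
  have himg0 : volume (y '' s) = 0 := by
    refine measure_mono_null ?_ hN'0
    rintro x ⟨ξ, hξ, rfl⟩
    exact hξ.1
  have hzero : ∫⁻ ξ in s, ENNReal.ofReal (deriv y ξ) = 0 := by
    have := himg.trans himg0
    simpa using this
  have hm : Measurable fun ξ => ENNReal.ofReal (deriv y ξ) :=
    ENNReal.measurable_ofReal.comp (measurable_deriv y)
  have hae : (fun ξ => ENNReal.ofReal (deriv y ξ)) =ᵐ[volume.restrict s] 0 :=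
    (lintegral_eq_zero_iff hm).mp hzero
  have hset : volume.restrict s {ξ | ENNReal.ofReal (deriv y ξ) ≠ 0} = 0 := by
    have := hae
    rw [Filter.EventuallyEq, ae_iff] at this
    simpa using this
  have hms : MeasurableSet {ξ | ENNReal.ofReal (deriv y ξ) ≠ 0} :=
    (hm (measurableSet_singleton 0)).compl
  rw [Measure.restrict_apply hms] at hset
  refine measure_mono_null ?_ hset
  rintro ξ ⟨h1, h2⟩
  have hpos : 0 < deriv y ξ := lt_of_le_of_ne (deriv_nonneg_of_monotone hy ξ) (Ne.symm h2)
  exact ⟨by simpa using ENNReal.ofReal_pos.mpr hpos |>.ne', ⟨hNN' h1, h2⟩⟩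

end CDL1

open CDL1 in
/-- Continuity of the Lagrangian energy density with respect to the data: if `yₙ → y`
uniformly, where `yₙ, y` are nondecreasing `1`-Lipschitz with `y - id` bounded, and
`gₙ → g` in `L¹(ℝ)`, then `∫ |gₙ(yₙ(ξ)) - g(y(ξ))| yₙ'(ξ) y'(ξ) dξ → 0`. -/
theorem composed_density_L1_convergence
    (y : ℝ → ℝ) (yn : ℕ → ℝ → ℝ)
    (hy : Monotone y) (hyn : ∀ n, Monotone (yn n))
    (hyL : LipschitzWith 1 y) (hynL : ∀ n, LipschitzWith 1 (yn n))
    (B : ℝ) (hB : ∀ ξ : ℝ, |y ξ - ξ| ≤ B)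
    (hconv : TendstoUniformly yn y atTop)
    (g : ℝ → ℝ) (gn : ℕ → ℝ → ℝ)
    (hg : Integrable g) (hgn : ∀ n, Integrable (gn n))
    (hgconv : Tendsto (fun n => ∫ x, |gn n x - g x|) atTop (nhds 0)) :
    Tendsto (fun n => ∫ ξ, |gn n (yn n ξ) - g (y ξ)| * deriv (yn n) ξ * deriv y ξ)
      atTop (nhds 0) := by
  classical
  -- measurable representatives
  set G : ℝ → ℝ := hg.1.mk g with hGdef
  have hGm : Measurable G := hg.1.stronglyMeasurable_mk.measurable
  have hGe : g =ᵐ[volume] G := hg.1.ae_eq_mk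
  set Gn : ℕ → ℝ → ℝ := fun n => (hgn n).1.mk (gn n) with hGndef
  have hGnm : ∀ n, Measurable (Gn n) := fun n => (hgn n).1.stronglyMeasurable_mk.measurable
  have hGne : ∀ n, gn n =ᵐ[volume] Gn n := fun n => (hgn n).1.ae_eq_mk
  have hGint : Integrable G := hg.congr hGe
  have hGnint : ∀ n, Integrable (Gn n) := fun n => (hgn n).congr (hGne n)
  have hycm : Measurable y := hyL.continuous.measurable
  have hyncm : ∀ n, Measurable (yn n) := fun n => (hynL n).continuous.measurable
  -- derivative bounds
  have hd0 : ∀ ξ, 0 ≤ deriv y ξ := deriv_nonneg_of_monotone hy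
  have hd1 : ∀ ξ, deriv y ξ ≤ 1 := deriv_le_one_of_lipschitz hyL
  have hdn0 : ∀ n ξ, 0 ≤ deriv (yn n) ξ := fun n => deriv_nonneg_of_monotone (hyn n)
  have hdn1 : ∀ n ξ, deriv (yn n) ξ ≤ 1 := fun n => deriv_le_one_of_lipschitz (hynL n)
  -- the integrand agrees a.e. with the measurable version
  have hae : ∀ n, (fun ξ => |gn n (yn n ξ) - g (y ξ)| * deriv (yn n) ξ * deriv y ξ)
      =ᵐ[volume] (fun ξ => |Gn n (yn n ξ) - G (y ξ)| * deriv (yn n) ξ * deriv y ξ) := by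
    intro n
    have hb1 : volume {ξ | yn n ξ ∈ {x | ¬ gn n x = Gn n x} ∧ deriv (yn n) ξ ≠ 0} = 0 :=
      null_preimage (hyn n) (hynL n).continuous (ae_iff.mp (hGne n))
    have hb2 : volume {ξ | y ξ ∈ {x | ¬ g x = G x} ∧ deriv y ξ ≠ 0} = 0 :=
      null_preimage hy hyL.continuous (ae_iff.mp hGe)
    have hb1' : ∀ᵐ ξ, ξ ∉ {ξ | yn n ξ ∈ {x | ¬ gn n x = Gn n x} ∧ deriv (yn n) ξ ≠ 0} :=
      measure_eq_zero_iff_ae_notMem.mp hb1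
    have hb2' : ∀ᵐ ξ, ξ ∉ {ξ | y ξ ∈ {x | ¬ g x = G x} ∧ deriv y ξ ≠ 0} :=
      measure_eq_zero_iff_ae_notMem.mp hb2
    filter_upwards [hb1', hb2'] with ξ h1 h2
    simp only [Set.mem_setOf_eq, not_and, not_not] at h1 h2
    by_cases hbn : deriv (yn n) ξ = 0
    · simp [hbn]
    by_cases hc : deriv y ξ = 0
    · simp [hc]
    have e1 : gn n (yn n ξ) = Gn n (yn n ξ) := by
      by_contra hne; exact hbn (h1 hne)
    have e2 : g (y ξ) = G (y ξ) := by
      by_contra hne; exact hc (h2 hne)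
    rw [e1, e2]
  -- the lintegral version
  set F : ℕ → ℝ → ENNReal := fun n ξ =>
    ENNReal.ofReal |Gn n (yn n ξ) - G (y ξ)| * ENNReal.ofReal (deriv (yn n) ξ)
      * ENNReal.ofReal (deriv y ξ) with hFdef
  have hmeasΦ : ∀ n, Measurable fun ξ => |Gn n (yn n ξ) - G (y ξ)| * deriv (yn n) ξ * deriv y ξ := by
    intro n
    exact ((((hGnm n).comp (hyncm n)).sub (hGm.comp hycm)).abs.mul
      (measurable_deriv (yn n))).mul (measurable_deriv y)
  have key : ∀ n, ∫ ξ, |gn n (yn n ξ) - g (y ξ)| * deriv (yn n) ξ * deriv y ξ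
      = (∫⁻ ξ, F n ξ).toReal := by
    intro n
    rw [integral_congr_ae (hae n)]
    rw [MeasureTheory.integral_eq_lintegral_of_nonneg_ae
      (Filter.Eventually.of_forall fun ξ =>
        mul_nonneg (mul_nonneg (abs_nonneg _) (hdn0 n ξ)) (hd0 ξ))
      (hmeasΦ n).aestronglyMeasurable]
    congr 1
    refine lintegral_congr fun ξ => ?_
    rw [ENNReal.ofReal_mul (mul_nonneg (abs_nonneg _) (hdn0 n ξ)),
      ENNReal.ofReal_mul (abs_nonneg _)]
  suffices hF : Tendsto (fun n => ∫⁻ ξ, F n ξ) atTop (nhds 0) by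
    have h2 := (ENNReal.tendsto_toReal (by simp : (0:ENNReal) ≠ ⊤)).comp hF
    simp only [Function.comp_def, ENNReal.toReal_zero] at h2
    rw [show (fun n => ∫ ξ, |gn n (yn n ξ) - g (y ξ)| * deriv (yn n) ξ * deriv y ξ)
      = fun n => (∫⁻ ξ, F n ξ).toReal from funext key]
    exact h2
  have hgconv' : Tendsto (fun n => ∫ x, |Gn n x - G x|) atTop (nhds 0) := by
    refine hgconv.congr fun n => ?_
    refine integral_congr_ae ?_
    filter_upwards [hGne n, hGe] with x e1 e2
    rw [e1, e2]
  rw [ENNReal.tendsto_nhds_zero]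
  intro ε hε
  obtain ⟨r, hr0, hrε⟩ : ∃ r : ℝ, 0 < r ∧ ENNReal.ofReal r ≤ ε := by
    rcases ENNReal.lt_iff_exists_real_btwn.mp hε with ⟨r, hr0, hr1, hr2⟩
    exact ⟨r, ENNReal.ofReal_pos.mp hr1, hr2.le⟩
  obtain ⟨h, h_supp, h_close, h_cont, h_int⟩ :=
    hGint.exists_hasCompactSupport_integral_sub_le (show (0:ℝ) < r/4 by positivity)
  obtain ⟨R, hR0, hRsub⟩ : ∃ R : ℝ, 0 ≤ R ∧ tsupport h ⊆ Set.Icc (-R) R := by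
    obtain ⟨R0, hR0⟩ := h_supp.isCompact.isBounded.subset_closedBall (0:ℝ)
    refine ⟨max R0 0, le_max_right _ _, ?_⟩
    refine subset_trans ?_ (Set.Icc_subset_Icc (neg_le_neg (le_max_left _ _)) (le_max_left _ _))
    rwa [Real.closedBall_eq_Icc, zero_sub, zero_add] at hR0
  have hB0 : 0 ≤ B := le_trans (abs_nonneg _) (hB 0)
  set M : ℝ := R + B + 1 with hMdef
  have hM0 : 0 < M := by simp only [hMdef]; linarith
  set εh : ℝ := r / (4 * (2 * M + 1)) with hεhdef
  have hεh0 : 0 < εh := div_pos hr0 (by nlinarith)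
  obtain ⟨δ, hδ0, hδ⟩ := Metric.uniformContinuous_iff.mp
    (h_supp.uniformContinuous_of_continuous h_cont) εh hεh0
  have hev1 : ∀ᶠ n in atTop, ∀ ξ : ℝ, dist (y ξ) (yn n ξ) < min δ 1 :=
    Metric.tendstoUniformly_iff.mp hconv (min δ 1) (lt_min hδ0 one_pos)
  have hev2 : ∀ᶠ n in atTop, ∫ x, |Gn n x - G x| < r/4 :=
    hgconv'.eventually_lt_const (by positivity)
  filter_upwards [hev1, hev2] with n hn1 hn2
  set u1 : ℝ → ENNReal := fun ξ =>
    ENNReal.ofReal |Gn n (yn n ξ) - G (yn n ξ)| * ENNReal.ofReal (deriv (yn n) ξ) with hu1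
  set u2 : ℝ → ENNReal := fun ξ =>
    ENNReal.ofReal |G (yn n ξ) - h (yn n ξ)| * ENNReal.ofReal (deriv (yn n) ξ) with hu2
  set u3 : ℝ → ENNReal := fun ξ => ENNReal.ofReal |h (yn n ξ) - h (y ξ)| with hu3
  set u4 : ℝ → ENNReal := fun ξ =>
    ENNReal.ofReal |h (y ξ) - G (y ξ)| * ENNReal.ofReal (deriv y ξ) with hu4
  have hpt : ∀ ξ, F n ξ ≤ u1 ξ + u2 ξ + u3 ξ + u4 ξ := by
    intro ξ
    have hb1 : ENNReal.ofReal (deriv (yn n) ξ) ≤ 1 := ENNReal.ofReal_le_one.mpr (hdn1 n ξ)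
    have hc1 : ENNReal.ofReal (deriv y ξ) ≤ 1 := ENNReal.ofReal_le_one.mpr (hd1 ξ)
    have htr : |Gn n (yn n ξ) - G (y ξ)| ≤ |Gn n (yn n ξ) - G (yn n ξ)|
        + |G (yn n ξ) - h (yn n ξ)| + |h (yn n ξ) - h (y ξ)| + |h (y ξ) - G (y ξ)| := by
      have t1 := abs_sub_le (Gn n (yn n ξ)) (G (yn n ξ)) (G (y ξ))
      have t2 := abs_sub_le (G (yn n ξ)) (h (yn n ξ)) (G (y ξ))
      have t3 := abs_sub_le (h (yn n ξ)) (h (y ξ)) (G (y ξ))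
      linarith
    have hofR : ENNReal.ofReal |Gn n (yn n ξ) - G (y ξ)| ≤
        ENNReal.ofReal |Gn n (yn n ξ) - G (yn n ξ)| + ENNReal.ofReal |G (yn n ξ) - h (yn n ξ)|
          + ENNReal.ofReal |h (yn n ξ) - h (y ξ)| + ENNReal.ofReal |h (y ξ) - G (y ξ)| := by
      refine le_trans (ENNReal.ofReal_le_ofReal htr) ?_
      rw [ENNReal.ofReal_add (by positivity) (abs_nonneg _),
        ENNReal.ofReal_add (by positivity) (abs_nonneg _),
        ENNReal.ofReal_add (abs_nonneg _) (abs_nonneg _)]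
    set A := ENNReal.ofReal |Gn n (yn n ξ) - G (yn n ξ)|
    set A2 := ENNReal.ofReal |G (yn n ξ) - h (yn n ξ)|
    set A3 := ENNReal.ofReal |h (yn n ξ) - h (y ξ)|
    set A4 := ENNReal.ofReal |h (y ξ) - G (y ξ)|
    set b := ENNReal.ofReal (deriv (yn n) ξ)
    set c := ENNReal.ofReal (deriv y ξ)
    have e1 : A * b * c ≤ u1 ξ := by
      calc A * b * c ≤ A * b * 1 := mul_le_mul' le_rfl hc1
      _ = A * b := mul_one _
    have e2 : A2 * b * c ≤ u2 ξ := by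
      calc A2 * b * c ≤ A2 * b * 1 := mul_le_mul' le_rfl hc1
      _ = A2 * b := mul_one _
    have e3 : A3 * b * c ≤ u3 ξ := by
      calc A3 * b * c ≤ A3 * 1 * 1 := mul_le_mul' (mul_le_mul' le_rfl hb1) hc1
      _ = A3 := by simp
    have e4 : A4 * b * c ≤ u4 ξ := by
      rw [mul_right_comm]
      calc A4 * c * b ≤ A4 * c * 1 := mul_le_mul' le_rfl hb1
      _ = A4 * c := mul_one _
    calc F n ξ = ENNReal.ofReal |Gn n (yn n ξ) - G (y ξ)| * b * c := rfl
    _ ≤ (A + A2 + A3 + A4) * b * c := by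
        exact mul_le_mul' (mul_le_mul' hofR le_rfl) le_rfl
    _ = A * b * c + A2 * b * c + A3 * b * c + A4 * b * c := by ring
    _ ≤ u1 ξ + u2 ξ + u3 ξ + u4 ξ := add_le_add (add_le_add (add_le_add e1 e2) e3) e4
  have hmeas_u2 : Measurable u2 :=
    ((hGm.comp (hyncm n)).sub (h_cont.measurable.comp (hyncm n))).abs.ennreal_ofReal.mul
      (measurable_deriv (yn n)).ennreal_ofReal
  have hmeas_u3 : Measurable u3 :=
    ((h_cont.measurable.comp (hyncm n)).sub (h_cont.measurable.comp hycm)).abs.ennreal_ofReal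
  have hmeas_u4 : Measurable u4 :=
    ((h_cont.measurable.comp hycm).sub (hGm.comp hycm)).abs.ennreal_ofReal.mul
      (measurable_deriv y).ennreal_ofReal
  have hsplit : ∫⁻ ξ, (u1 ξ + u2 ξ + u3 ξ + u4 ξ)
      = (∫⁻ ξ, u1 ξ) + (∫⁻ ξ, u2 ξ) + (∫⁻ ξ, u3 ξ) + (∫⁻ ξ, u4 ξ) := by
    rw [lintegral_add_right _ hmeas_u4, lintegral_add_right _ hmeas_u3,
      lintegral_add_right _ hmeas_u2]
  have b1 : ∫⁻ ξ, u1 ξ ≤ ENNReal.ofReal (r/4) := by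
    have hcov := lintegral_comp_le (hyn n) (fun x => ENNReal.ofReal |Gn n x - G x|)
    have heq : ∫⁻ x, ENNReal.ofReal |Gn n x - G x| = ENNReal.ofReal (∫ x, |Gn n x - G x|) :=
      (MeasureTheory.ofReal_integral_eq_lintegral_ofReal (((hGnint n).sub hGint).abs)
        (Filter.Eventually.of_forall fun x => abs_nonneg _)).symm
    calc ∫⁻ ξ, u1 ξ ≤ ∫⁻ x, ENNReal.ofReal |Gn n x - G x| := hcov
    _ = ENNReal.ofReal (∫ x, |Gn n x - G x|) := heq
    _ ≤ ENNReal.ofReal (r/4) := ENNReal.ofReal_le_ofReal hn2.le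
  have hGhint : Integrable (fun x => |G x - h x|) := (hGint.sub h_int).abs
  have hGh : ∫ x, |G x - h x| ≤ r/4 := by
    refine le_trans (le_of_eq ?_) h_close
    simp [Real.norm_eq_abs]
  have b2 : ∫⁻ ξ, u2 ξ ≤ ENNReal.ofReal (r/4) := by
    have hcov := lintegral_comp_le (hyn n) (fun x => ENNReal.ofReal |G x - h x|)
    have heq : ∫⁻ x, ENNReal.ofReal |G x - h x| = ENNReal.ofReal (∫ x, |G x - h x|) :=
      (MeasureTheory.ofReal_integral_eq_lintegral_ofReal hGhint
        (Filter.Eventually.of_forall fun x => abs_nonneg _)).symm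
    calc ∫⁻ ξ, u2 ξ ≤ ∫⁻ x, ENNReal.ofReal |G x - h x| := hcov
    _ = ENNReal.ofReal (∫ x, |G x - h x|) := heq
    _ ≤ ENNReal.ofReal (r/4) := ENNReal.ofReal_le_ofReal hGh
  have b4 : ∫⁻ ξ, u4 ξ ≤ ENNReal.ofReal (r/4) := by
    have hcov := lintegral_comp_le hy (fun x => ENNReal.ofReal |h x - G x|)
    have heq : ∫⁻ x, ENNReal.ofReal |h x - G x| = ENNReal.ofReal (∫ x, |h x - G x|) :=
      (MeasureTheory.ofReal_integral_eq_lintegral_ofReal (h_int.sub hGint).abs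
        (Filter.Eventually.of_forall fun x => abs_nonneg _)).symm
    have hflip : ∫ x, |h x - G x| = ∫ x, |G x - h x| := by
      simp_rw [abs_sub_comm]
    calc ∫⁻ ξ, u4 ξ ≤ ∫⁻ x, ENNReal.ofReal |h x - G x| := hcov
    _ = ENNReal.ofReal (∫ x, |h x - G x|) := heq
    _ ≤ ENNReal.ofReal (r/4) := by rw [hflip]; exact ENNReal.ofReal_le_ofReal hGh
  have b3 : ∫⁻ ξ, u3 ξ ≤ ENNReal.ofReal (r/4) := by
    have hptu3 : ∀ ξ, u3 ξ ≤ (Set.Icc (-M) M).indicator (fun _ => ENNReal.ofReal εh) ξ := by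
      intro ξ
      by_cases hK : ξ ∈ Set.Icc (-M) M
      · rw [Set.indicator_of_mem hK]
        have hdd : dist (yn n ξ) (y ξ) < δ := by
          rw [dist_comm]
          exact lt_of_lt_of_le (hn1 ξ) (min_le_left _ _)
        have := hδ hdd
        refine ENNReal.ofReal_le_ofReal ?_
        rw [← Real.dist_eq]
        exact this.le
      · rw [Set.indicator_of_notMem hK]
        have habs : M < |ξ| := by
          by_contra hle
          exact hK (by rw [Set.mem_Icc, ← abs_le]; exact not_lt.mp hle)
        have hy1 : R + 1 < |y ξ| := by
          have := abs_sub_abs_le_abs_sub ξ (y ξ)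
          have h2 : |ξ - y ξ| = |y ξ - ξ| := abs_sub_comm _ _
          have h3 := hB ξ
          simp only [hMdef] at habs
          linarith
        have h5 : h (y ξ) = 0 := by
          apply image_eq_zero_of_notMem_tsupport
          intro hmem
          have := hRsub hmem
          rw [Set.mem_Icc, ← abs_le] at this
          linarith
        have hy2 : R < |yn n ξ| := by
          have hd2 : dist (y ξ) (yn n ξ) < 1 := lt_of_lt_of_le (hn1 ξ) (min_le_right _ _)
          have := abs_sub_abs_le_abs_sub (y ξ) (yn n ξ)
          rw [← Real.dist_eq] at this
          linarith
        have h6 : h (yn n ξ) = 0 := by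
          apply image_eq_zero_of_notMem_tsupport
          intro hmem
          have := hRsub hmem
          rw [Set.mem_Icc, ← abs_le] at this
          linarith
        simp only [hu3, h5, h6, sub_zero, abs_zero, ENNReal.ofReal_zero, le_refl]
    calc ∫⁻ ξ, u3 ξ ≤ ∫⁻ ξ, (Set.Icc (-M) M).indicator (fun _ => ENNReal.ofReal εh) ξ :=
        lintegral_mono hptu3
    _ = ENNReal.ofReal εh * volume (Set.Icc (-M) M) :=
        lintegral_indicator_const measurableSet_Icc _
    _ = ENNReal.ofReal εh * ENNReal.ofReal (2 * M) := by
        rw [Real.volume_Icc]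
        congr 1
        ring
    _ = ENNReal.ofReal (εh * (2 * M)) := (ENNReal.ofReal_mul hεh0.le).symm
    _ ≤ ENNReal.ofReal (r/4) := by
        refine ENNReal.ofReal_le_ofReal ?_
        rw [hεhdef, div_mul_eq_mul_div, div_le_div_iff₀ (by nlinarith) (by norm_num)]
        nlinarith
  calc ∫⁻ ξ, F n ξ ≤ ∫⁻ ξ, (u1 ξ + u2 ξ + u3 ξ + u4 ξ) := lintegral_mono hpt
  _ = (∫⁻ ξ, u1 ξ) + (∫⁻ ξ, u2 ξ) + (∫⁻ ξ, u3 ξ) + (∫⁻ ξ, u4 ξ) := hsplit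
  _ ≤ ENNReal.ofReal (r/4) + ENNReal.ofReal (r/4) + ENNReal.ofReal (r/4) + ENNReal.ofReal (r/4) :=
      add_le_add (add_le_add (add_le_add b1 b2) b3) b4
  _ = ENNReal.ofReal r := by
      rw [← ENNReal.ofReal_add (by positivity) (by positivity),
        ← ENNReal.ofReal_add (by positivity) (by positivity),
        ← ENNReal.ofReal_add (by positivity) (by positivity)]
      congr 1
      ring
  _ ≤ ε := hrε
end

section
/- Let μ be a finite nonnegative Borel measure on ℝ and define y : ℝ → ℝ by y(ξ) = sup{ x ∈ ℝ : μ((−∞,x)) + x < ξ }. Then: (a) ξ − μ(ℝ) ≤ y(ξ) ≤ ξ for every ξ ∈ ℝ; (b) y is nondecreasing; (c) y(ξ₂) − y(ξ₁) ≤ ξ₂ − ξ₁ whenever ξ₁ ≤ ξ₂, so y is Lipschitz continuous with Lipschitz constant 1. -/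
open MeasureTheory

/-- Properties of the characteristic map of the Eulerian-to-Lagrangian transformation:
for a finite nonnegative Borel measure `μ` on `ℝ` and
`y(ξ) = sup{x : μ((-∞,x)) + x < ξ}`, one has (a) `ξ - μ(ℝ) ≤ y(ξ) ≤ ξ`;
(b) `y` is nondecreasing; (c) `y(ξ₂) - y(ξ₁) ≤ ξ₂ - ξ₁` for `ξ₁ ≤ ξ₂`, so `y` is
`1`-Lipschitz. -/
theorem characteristic_map_properties (μ : Measure ℝ) [IsFiniteMeasure μ]
    (y : ℝ → ℝ)
    (hy : ∀ ξ : ℝ, y ξ = sSup {x : ℝ | (μ (Set.Iio x)).toReal + x < ξ}) :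
    (∀ ξ : ℝ, ξ - (μ Set.univ).toReal ≤ y ξ ∧ y ξ ≤ ξ) ∧
    Monotone y ∧
    (∀ ξ₁ ξ₂ : ℝ, ξ₁ ≤ ξ₂ → y ξ₂ - y ξ₁ ≤ ξ₂ - ξ₁) ∧
    LipschitzWith 1 y := by
  set c : ℝ := (μ Set.univ).toReal with hc
  have hcle : ∀ x : ℝ, (μ (Set.Iio x)).toReal ≤ c := by
    intro x
    exact ENNReal.toReal_mono (measure_ne_top μ _) (measure_mono (Set.subset_univ _))
  have hnonneg : ∀ x : ℝ, 0 ≤ (μ (Set.Iio x)).toReal := fun x => ENNReal.toReal_nonneg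
  have hmem : ∀ ξ x : ℝ, x < ξ - c → x ∈ {x : ℝ | (μ (Set.Iio x)).toReal + x < ξ} := by
    intro ξ x hx
    have := hcle x
    simp only [Set.mem_setOf_eq]
    linarith
  have hne : ∀ ξ : ℝ, {x : ℝ | (μ (Set.Iio x)).toReal + x < ξ}.Nonempty := by
    intro ξ
    exact ⟨ξ - c - 1, hmem ξ _ (by linarith)⟩
  have hbdd : ∀ ξ : ℝ, BddAbove {x : ℝ | (μ (Set.Iio x)).toReal + x < ξ} := by
    intro ξ
    refine ⟨ξ, fun x hx => ?_⟩
    have := hnonneg x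
    simp only [Set.mem_setOf_eq] at hx
    linarith
  have ha : ∀ ξ : ℝ, ξ - c ≤ y ξ ∧ y ξ ≤ ξ := by
    intro ξ
    constructor
    · refine le_of_forall_pos_le_add fun ε hε => ?_
      have h1 : ξ - c - ε ≤ y ξ := by
        rw [hy ξ]
        exact le_csSup (hbdd ξ) (hmem ξ _ (by linarith))
      linarith
    · rw [hy ξ]
      refine csSup_le (hne ξ) fun x hx => ?_
      have := hnonneg x
      simp only [Set.mem_setOf_eq] at hx
      linarith
  have hcprop : ∀ ξ₁ ξ₂ : ℝ, ξ₁ ≤ ξ₂ → y ξ₂ - y ξ₁ ≤ ξ₂ - ξ₁ := by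
    intro ξ₁ ξ₂ h12
    set d := ξ₂ - ξ₁ with hd
    have key : y ξ₂ ≤ y ξ₁ + d := by
      rw [hy ξ₂]
      refine csSup_le (hne ξ₂) fun x hx => ?_
      simp only [Set.mem_setOf_eq] at hx
      have hmono : (μ (Set.Iio (x - d))).toReal ≤ (μ (Set.Iio x)).toReal := by
        refine ENNReal.toReal_mono (measure_ne_top μ _) (measure_mono ?_)
        exact Set.Iio_subset_Iio (by linarith)
      have hx' : x - d ∈ {z : ℝ | (μ (Set.Iio z)).toReal + z < ξ₁} := by
        simp only [Set.mem_setOf_eq]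
        linarith
      have : x - d ≤ y ξ₁ := by
        rw [hy ξ₁]; exact le_csSup (hbdd ξ₁) hx'
      linarith
    linarith
  have hmono : Monotone y := by
    intro ξ₁ ξ₂ h12
    rw [hy ξ₁, hy ξ₂]
    exact csSup_le_csSup (hbdd ξ₂) (hne ξ₁) fun x hx => lt_of_lt_of_le hx h12
  refine ⟨ha, hmono, hcprop, ?_⟩
  refine LipschitzWith.of_dist_le_mul fun a b => ?_
  rw [Real.dist_eq, Real.dist_eq, NNReal.coe_one, one_mul]
  rcases le_total a b with h | h
  · rw [abs_of_nonpos (by linarith [hmono h]), abs_of_nonpos (by linarith)]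
    linarith [hcprop a b h]
  · rw [abs_of_nonneg (by linarith [hmono h]), abs_of_nonneg (by linarith)]
    linarith [hcprop b a h]
end

section
/- Let f : ℝ → ℝ be differentiable everywhere with derivative f', and suppose f(ξ) → 0 as ξ → −∞. Let a, b : ℝ → [0,∞) be measurable functions such that f'(ξ)² ≤ a(ξ)·b(ξ) for every ξ and f'(ξ) = 0 whenever a(ξ) = 0. Assume that the functions f²·a and b are Lebesgue-integrable on ℝ. Then for every ξ ∈ ℝ, f(ξ)² ≤ ∫_ℝ f(η)² a(η) dη + ∫_ℝ b(η) dη; in particular sup_ξ f(ξ)² is bounded by the right-hand side. -/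
open MeasureTheory Filter

/-- A-priori sup bound: if `f` is differentiable with `f → 0` at `-∞`, `a, b ≥ 0` are
measurable with `f'² ≤ a b` pointwise and `f' = 0` wherever `a = 0`, and both `f²·a`
and `b` are integrable, then `f(ξ)² ≤ ∫ f² a + ∫ b` for every `ξ`. -/
theorem sup_bound_by_energy (f f' : ℝ → ℝ)
    (hf : ∀ x : ℝ, HasDerivAt f (f' x) x)
    (hlim : Tendsto f atBot (nhds 0))
    (a b : ℝ → ℝ) (ham : Measurable a) (hbm : Measurable b)
    (ha0 : ∀ ξ, 0 ≤ a ξ) (hb0 : ∀ ξ, 0 ≤ b ξ)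
    (hab : ∀ ξ, f' ξ ^ 2 ≤ a ξ * b ξ)
    (hzero : ∀ ξ, a ξ = 0 → f' ξ = 0)
    (hia : Integrable (fun ξ => f ξ ^ 2 * a ξ))
    (hib : Integrable b) :
    ∀ ξ : ℝ, f ξ ^ 2 ≤ (∫ η, f η ^ 2 * a η) + ∫ η, b η := by
  intro ξ
  set φ : ℝ → ℝ := fun η => f η ^ 2 * a η + b η with hφ
  have hiφ : Integrable φ := hia.add hib
  set C : ℝ := (∫ η, f η ^ 2 * a η) + ∫ η, b η with hC
  have hCint : C = ∫ η, φ η := (integral_add hia hib).symm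
  -- pointwise domination |2 f f'| ≤ φ
  have hdom : ∀ x : ℝ, |2 * f x * f' x| ≤ φ x := by
    intro x
    have h1 : |f' x| ≤ Real.sqrt (a x) * Real.sqrt (b x) := by
      rw [← Real.sqrt_mul (ha0 x)]
      have := Real.sqrt_le_sqrt (hab x)
      rwa [Real.sqrt_sq_eq_abs] at this
    have h2 : |2 * f x * f' x| ≤ 2 * (|f x| * Real.sqrt (a x)) * Real.sqrt (b x) := by
      have : |2 * f x * f' x| = 2 * |f x| * |f' x| := by
        rw [abs_mul, abs_mul, abs_two]
      rw [this]
      have hs : 0 ≤ Real.sqrt (a x) := Real.sqrt_nonneg _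
      calc 2 * |f x| * |f' x| ≤ 2 * |f x| * (Real.sqrt (a x) * Real.sqrt (b x)) := by
            apply mul_le_mul_of_nonneg_left h1
            positivity
        _ = 2 * (|f x| * Real.sqrt (a x)) * Real.sqrt (b x) := by ring
    have h3 : 2 * (|f x| * Real.sqrt (a x)) * Real.sqrt (b x)
        ≤ (|f x| * Real.sqrt (a x)) ^ 2 + Real.sqrt (b x) ^ 2 :=
      two_mul_le_add_sq _ _
    have h4 : (|f x| * Real.sqrt (a x)) ^ 2 + Real.sqrt (b x) ^ 2 = φ x := by
      rw [mul_pow, sq_abs, Real.sq_sqrt (ha0 x), Real.sq_sqrt (hb0 x)]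
    linarith
  -- f' is measurable since it equals deriv f
  have hf'eq : f' = deriv f := by
    funext x; exact ((hf x).deriv).symm
  have hf'm : Measurable f' := hf'eq ▸ measurable_deriv f
  have hfc : Continuous f := by
    have : Differentiable ℝ f := fun x => (hf x).differentiableAt
    exact this.continuous
  -- g' := 2 f f' is integrable on ℝ (dominated by φ)
  have hg'm : Measurable (fun x => 2 * f x * f' x) :=
    ((measurable_const.mul hfc.measurable).mul hf'm)
  have hig' : Integrable (fun x => 2 * f x * f' x) := by
    refine Integrable.mono' hiφ hg'm.aestronglyMeasurable ?_
    filter_upwards with x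
    rw [Real.norm_eq_abs]
    exact hdom x
  -- for η ≤ ξ : f ξ ^ 2 - f η ^ 2 ≤ ∫ φ = C
  have key : ∀ η : ℝ, η ≤ ξ → f ξ ^ 2 ≤ f η ^ 2 + C := by
    intro η hη
    have hderiv : ∀ x ∈ Set.uIcc η ξ, HasDerivAt (fun y => f y ^ 2)
        (2 * f x * f' x) x := by
      intro x _
      have := (hf x).fun_pow 2
      simpa [mul_comm, mul_assoc, mul_left_comm] using this
    have hftc := intervalIntegral.integral_eq_sub_of_hasDerivAt hderiv
      (hig'.intervalIntegrable)
    have hmono : (∫ x in η..ξ, 2 * f x * f' x) ≤ ∫ x in η..ξ, φ x := by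
      apply intervalIntegral.integral_mono_on hη (hig'.intervalIntegrable)
        (hiφ.intervalIntegrable)
      intro x _
      exact (le_abs_self _).trans (hdom x)
    have hset : (∫ x in η..ξ, φ x) ≤ ∫ x, φ x := by
      rw [intervalIntegral.integral_of_le hη]
      apply setIntegral_le_integral hiφ
      filter_upwards with x
      have := mul_nonneg (sq_nonneg (f x)) (ha0 x)
      have := hb0 x
      simp only [Pi.zero_apply, hφ]
      linarith
    have : f ξ ^ 2 - f η ^ 2 ≤ C := by
      rw [hCint]; rw [hftc] at hmono; linarith
    linarith
  -- let η → -∞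
  have htend : Tendsto (fun η => f η ^ 2 + C) atBot (nhds C) := by
    have h0 : Tendsto (fun η => f η ^ 2) atBot (nhds 0) := by
      have := hlim.pow 2
      simpa using this
    simpa using h0.add_const C
  exact ge_of_tendsto htend ((eventually_le_atBot ξ).mono key)
end
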